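/- arXiv:2505.10605 — 10 statements merged into one kernel-verified Lean document; each statement's English description precedes it below -/
import Mathlib

section
/- Let (X_n)_{n≥1} be a sequence of non-negative random variables and (b_n)_{n≥1} a sequence of positive real numbers; set S_n = Σ_{k=1}^n b_k X_k and A_n = Σ_{k=1}^n b_k. Suppose that: (i) A_n → ∞ as n → ∞; (ii) there exist a constant C > 0 and N ∈ ℕ such that Σ_{k=m}^n b_k E[X_k] ≤ C Σ_{k=m}^n b_k for all m ≤ n with n − m ≥ N; (iii) there exists ψ ∈ Ψ_c and a constant K such that E[|S_n − E[S_n]|²] ≤ K A_n² / ψ(A_n) for all n. Then (S_n − E[S_n])/A_n → 0 almost surely. -/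
open Filter MeasureTheory Topology

/-- `Ψ_c`: the set of monotonically increasing functions `ψ : (0,∞) → (0,∞)` with
`∑_{n=1}^∞ 1/(n ψ(n)) < ∞`. -/
def PsiC (ψ : ℝ → ℝ) : Prop :=
  (∀ x : ℝ, 0 < x → 0 < ψ x) ∧ MonotoneOn ψ (Set.Ioi (0 : ℝ)) ∧
    Summable fun n : ℕ => 1 / ((n + 1 : ℝ) * ψ (n + 1))

/-!
Fix `δ > 0` and `θ = 1 + δ / (2C)`. Cut `ℕ` into blocks `[u j, u (j + 1))` with `A (u j) ≥ θ ^ j`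
on which `A` grows by less than the factor `θ`. In block `j` only the first `N + 1` indices and
the last one are checked against the threshold `δ/2 · A (u j)`: by Chebyshev each check fails with
probability `O(1 / ψ (θ ^ j))`, which is summable by Cauchy condensation since `ψ ∈ Ψ_c`, so by
Borel–Cantelli almost surely all checks eventually pass. Any other index of the block lies in a
block longer than `N`, where `S n` is monotone (the `X k` are non-negative) and, by (ii),
`E[S n]` increases by at most `C (θ - 1) A (u j) = δ/2 · A (u j)`; sandwiching between the two
ends of the block gives the bound `δ · A n`.
-/

open ProbabilityTheory Finset

lemma Summable.comp_div_nat {s : ℕ → ℝ} (hs : Summable s) (hs0 : 0 ≤ s) (M : ℕ) [NeZero M] :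
    Summable fun j => s (j / M) := by
  have hprod : Summable fun p : ℕ × Fin M => s p.1 * 1 :=
    hs.mul_of_nonneg (Summable.of_finite (f := fun _ : Fin M => (1 : ℝ))) hs0 fun _ => zero_le_one
  simpa [Function.comp_def, Nat.divModEquiv] using (Nat.divModEquiv M).summable_iff.2 hprod

namespace PsiC

variable {ψ : ℝ → ℝ}

lemma summable_one_div_two_pow (hψ : PsiC ψ) : Summable fun n : ℕ => 1 / ψ (2 ^ n) := by
  obtain ⟨hpos, hmono, hsum⟩ := hψ
  -- `f 0 = 1 / 0 = 0`, harmless for condensation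
  set f : ℕ → ℝ := fun n => 1 / (n * ψ n)
  have hf0 : ∀ n, 0 ≤ f n := by
    rintro (_ | n)
    · simp [f]
    · have := hpos (n + 1) (by positivity)
      simp only [f]
      push_cast
      positivity
  have hf_anti : ∀ ⦃m n : ℕ⦄, 0 < m → m ≤ n → f n ≤ f m := by
    intro m n hm hmn
    have hm' : (0 : ℝ) < m := by exact_mod_cast hm
    have hmn' : (m : ℝ) ≤ n := by exact_mod_cast hmn
    have := hpos m hm'
    exact one_div_le_one_div_of_le (by positivity) <|
      mul_le_mul hmn' (hmono hm' (hm'.trans_le hmn') hmn') this.le (hm'.le.trans hmn')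
  have hf : Summable f := (summable_nat_add_iff 1).1 <| by simpa [f] using hsum
  refine ((summable_condensed_iff_of_nonneg hf0 hf_anti).2 hf).congr fun k => ?_
  have := hpos (2 ^ k) (by positivity)
  simp only [f]
  push_cast
  field_simp

lemma summable_one_div_pow (hψ : PsiC ψ) {θ : ℝ} (hθ : 1 < θ) :
    Summable fun j : ℕ => 1 / ψ (θ ^ j) := by
  obtain ⟨M, hM⟩ : ∃ M : ℕ, (2 : ℝ) < θ ^ M := pow_unbounded_of_one_lt 2 hθ
  have : NeZero M := ⟨by rintro rfl; norm_num at hM⟩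
  have hpos := hψ.1
  -- `θ ^ j ≥ 2 ^ (j / M)` reduces the claim to the dyadic case
  refine Summable.of_nonneg_of_le (fun j => (one_div_pos.2 (hpos _ (by positivity))).le)
    (fun j => ?_) (hψ.summable_one_div_two_pow.comp_div_nat
      (fun n => (one_div_pos.2 (hpos _ (by positivity))).le) M)
  have hle : (2 : ℝ) ^ (j / M) ≤ θ ^ j := calc
    (2 : ℝ) ^ (j / M) ≤ (θ ^ M) ^ (j / M) := pow_le_pow_left₀ (by norm_num) hM.le _
    _ = θ ^ (M * (j / M)) := (pow_mul θ M _).symm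
    _ ≤ θ ^ j := pow_le_pow_right₀ hθ.le (Nat.mul_div_le j M)
  have h2 : (0 : ℝ) < 2 ^ (j / M) := by positivity
  exact one_div_le_one_div_of_le (hpos _ h2) (hψ.2.1 h2 (h2.trans_le hle) hle)

lemma mul_sq_div_le (hψ : PsiC ψ) (K : ℝ) {x y z : ℝ} (hx : 0 < x) (hxy : x ≤ y) (hyz : y ≤ z) :
    K * y ^ 2 / ψ y ≤ max K 0 * z ^ 2 / ψ x := by
  have hy : 0 < y := hx.trans_le hxy
  have hψx := hψ.1 x hx
  calc K * y ^ 2 / ψ y ≤ max K 0 * y ^ 2 / ψ y := by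
        gcongr
        · exact (hψ.1 y hy).le
        · exact le_max_left K 0
    _ ≤ max K 0 * z ^ 2 / ψ x := by
        gcongr
        exact hψ.2.1 hx hy hxy

end PsiC

lemma monotone_sum_Icc_one {f : ℕ → ℝ} (hf : ∀ k, 1 ≤ k → 0 ≤ f k) :
    Monotone fun n => ∑ k ∈ Icc 1 n, f k := fun _ _ h =>
  sum_le_sum_of_subset_of_nonneg (Icc_subset_Icc_right h) fun k hk _ => hf k (mem_Icc.1 hk).1

lemma sum_Icc_one_sub_sum_Icc_one {M : Type*} [AddCommGroup M] (f : ℕ → M) {p q : ℕ} (h : p ≤ q) :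
    ∑ k ∈ Icc 1 q, f k - ∑ k ∈ Icc 1 p, f k = ∑ k ∈ Icc (p + 1) q, f k := by
  have hIcc : ∀ r, Icc 1 r = Ioc 0 r := Icc_add_one_left_eq_Ioc 0
  rw [sub_eq_iff_eq_add', Icc_add_one_left_eq_Ioc, hIcc, hIcc, sum_Ioc_consecutive f p.zero_le h]

lemma exists_geometric_blocks {A : ℕ → ℝ} (hA : Tendsto A atTop atTop) {θ : ℝ} (hθ : 1 < θ)
    (n₀ : ℕ) : ∃ u : ℕ → ℕ, StrictMono u ∧ n₀ ≤ u 0 ∧ (∀ j, θ ^ j ≤ A (u j)) ∧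
      ∀ j n, u j ≤ n → n < u (j + 1) → A n < θ * A (u j) := by
  have hex : ∀ x, ∃ n, x < n ∧ θ * A x ≤ A n := fun x =>
    ((eventually_gt_atTop x).and (hA.eventually_ge_atTop (θ * A x))).exists
  obtain ⟨n₁, hn₁A, hn₁⟩ := ((hA.eventually_ge_atTop 1).and (eventually_ge_atTop n₀)).exists
  classical
  set step : ℕ → ℕ := fun x => Nat.find (hex x)
  set u : ℕ → ℕ := fun j => step^[j] n₁
  have hu_succ : ∀ j, u (j + 1) = step (u j) := fun j => Function.iterate_succ_apply' step j n₁
  have hu_pow : ∀ j, θ ^ j ≤ A (u j) := by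
    intro j
    induction j with
    | zero => simpa [u] using hn₁A
    | succ j ih =>
      rw [hu_succ, pow_succ']
      exact (mul_le_mul_of_nonneg_left ih (by linarith)).trans (Nat.find_spec (hex (u j))).2
  refine ⟨u, strictMono_nat_of_lt_succ fun j => ?_, hn₁, hu_pow, fun j n hjn hnj => ?_⟩
  · rw [hu_succ]
    exact (Nat.find_spec (hex (u j))).1
  · rcases hjn.eq_or_lt with rfl | hlt
    · have := (pow_pos (by linarith) j).trans_le (hu_pow j)
      nlinarith
    · rw [hu_succ] at hnj
      simpa [hlt] using Nat.find_min (hex (u j)) hnj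

lemma abs_sub_le_of_checkpoints {s e : ℕ → ℝ} (hs : Monotone s) (he : Monotone e) {p q N : ℕ}
    {ε : ℝ} (hcheck : ∀ k, p ≤ k → k ≤ q → (k ≤ p + N ∨ k = q) → |s k - e k| ≤ ε)
    (hmean : p + N < q → e q - e p ≤ ε) {n : ℕ} (hpn : p ≤ n) (hnq : n ≤ q) :
    |s n - e n| ≤ 2 * ε := by
  have hε : 0 ≤ ε := (abs_nonneg _).trans (hcheck p le_rfl (hpn.trans hnq) (.inl (by omega)))
  by_cases hn : n ≤ p + N
  · linarith [hcheck n hpn hnq (.inl hn)]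
  have hp := abs_le.1 (hcheck p le_rfl (hpn.trans hnq) (.inl (by omega)))
  have hq := abs_le.1 (hcheck q (hpn.trans hnq) le_rfl (.inr rfl))
  have hpq := hmean (by omega)
  have := hs hpn; have := hs hnq; have := he hpn; have := he hnq
  exact abs_le.2 ⟨by linarith, by linarith⟩

section

variable {Ω : Type*} [MeasurableSpace Ω] {P : Measure Ω}

lemma ae_tendsto_div_of_forall_ae_eventually_le {f : ℕ → Ω → ℝ} {A : ℕ → ℝ}
    (hA : ∀ᶠ n in atTop, 0 < A n) (h : ∀ δ > 0, ∀ᵐ ω ∂P, ∀ᶠ n in atTop, |f n ω| ≤ δ * A n) :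
    ∀ᵐ ω ∂P, Tendsto (fun n => f n ω / A n) atTop (𝓝 0) := by
  have h' : ∀ᵐ ω ∂P, ∀ m : ℕ, ∀ᶠ n in atTop, |f n ω| ≤ 1 / (m + 1) * A n :=
    ae_all_iff.2 fun m => h _ (by positivity)
  filter_upwards [h'] with ω hω
  refine NormedAddGroup.tendsto_nhds_zero.2 fun ε hε => ?_
  obtain ⟨m, hm⟩ := exists_nat_one_div_lt hε
  filter_upwards [hω m, hA] with n hn hAn
  rw [norm_div, Real.norm_eq_abs, Real.norm_eq_abs, abs_of_pos hAn, div_lt_iff₀ hAn]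
  exact hn.trans_lt (mul_lt_mul_of_pos_right hm hAn)

variable [IsFiniteMeasure P]

lemma ae_eventually_forall_mem_abs_sub_integral_lt {Y : ℕ → Ω → ℝ} (hY : ∀ n, MemLp (Y n) 2 P)
    {R : ℕ → Finset ℕ} {M : ℕ} (hR : ∀ j, #(R j) ≤ M) {a c : ℕ → ℝ} (ha : ∀ j, 0 < a j)
    (hvar : ∀ j, ∀ n ∈ R j, variance (Y n) P / a j ^ 2 ≤ c j) (hc : Summable c) :
    ∀ᵐ ω ∂P, ∀ᶠ j in atTop, ∀ n ∈ R j, |Y n ω - ∫ ω', Y n ω' ∂P| < a j := by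
  set E : ℕ → Set Ω := fun j => ⋃ n ∈ R j, {ω | a j ≤ |Y n ω - ∫ ω', Y n ω' ∂P|}
  have hE : ∀ j, P (E j) ≤ ENNReal.ofReal (M * c j) := fun j => calc
    P (E j) ≤ ∑ n ∈ R j, P {ω | a j ≤ |Y n ω - ∫ ω', Y n ω' ∂P|} := measure_biUnion_finset_le _ _
    _ ≤ ∑ n ∈ R j, ENNReal.ofReal (c j) := sum_le_sum fun n hn =>
        (meas_ge_le_variance_div_sq (hY n) (ha j)).trans (ENNReal.ofReal_le_ofReal (hvar j n hn))
    _ = #(R j) * ENNReal.ofReal (c j) := by rw [sum_const, nsmul_eq_mul]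
    _ ≤ M * ENNReal.ofReal (c j) := by gcongr; exact_mod_cast hR j
    _ = ENNReal.ofReal (M * c j) := by
        rw [ENNReal.ofReal_mul (Nat.cast_nonneg M), ENNReal.ofReal_natCast]
  have hsum : ∑' j, P (E j) ≠ ⊤ :=
    ne_top_of_le_ne_top (hc.mul_left (M : ℝ)).tsum_ofReal_ne_top (ENNReal.tsum_le_tsum hE)
  filter_upwards [ae_eventually_notMem hsum] with ω hω
  filter_upwards [hω] with j hj n hn
  simp only [E, Set.mem_iUnion, Set.mem_ofPred_eq, not_exists, not_le] at hj
  exact hj n hn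


theorem ae_eventually_abs_sub_integral_le_mul {S : ℕ → Ω → ℝ} {A : ℕ → ℝ}
    (hS : ∀ n, MemLp (S n) 2 P) (hS_mono : ∀ ω, Monotone (S · ω))
    (hA : Monotone A) (hA_top : Tendsto A atTop atTop) {C : ℝ} (hC : 0 < C) {N : ℕ}
    (hmean : ∀ p q, p + N < q → ∫ ω, S q ω ∂P - ∫ ω, S p ω ∂P ≤ C * (A q - A p))
    {ψ : ℝ → ℝ} (hψ : PsiC ψ) {K : ℝ}
    (hvar : ∀ᶠ n in atTop, variance (S n) P ≤ K * A n ^ 2 / ψ (A n)) {δ : ℝ} (hδ : 0 < δ) :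
    ∀ᵐ ω ∂P, ∀ᶠ n in atTop, |S n ω - ∫ ω', S n ω' ∂P| ≤ δ * A n := by
  set θ := 1 + δ / (2 * C)
  have hθ : 1 < θ := by simp only [θ]; linarith [show 0 < δ / (2 * C) by positivity]
  have hCθ : C * (θ - 1) = δ / 2 := by simp only [θ]; field_simp; ring
  obtain ⟨n₀, hn₀⟩ := eventually_atTop.1 hvar
  obtain ⟨u, hu, hn₀u, hu_pow, hu_block⟩ := exists_geometric_blocks hA_top hθ n₀
  have hθj : ∀ j, 0 < θ ^ j := fun j => pow_pos (by linarith) j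
  have hAu : ∀ j, 0 < A (u j) := fun j => (hθj j).trans_le (hu_pow j)
  have hu_succ : ∀ j, u j < u (j + 1) := fun j => hu (Nat.lt_add_one j)
  have hu_last : ∀ j, u j ≤ u (j + 1) - 1 := fun j => by have := hu_succ j; omega
  set R : ℕ → Finset ℕ := fun j =>
    (Icc (u j) (u (j + 1) - 1)).filter fun k => k ≤ u j + N ∨ k = u (j + 1) - 1
  have hR : ∀ j, #(R j) ≤ N + 2 := fun j => calc
    #(R j) ≤ #(Icc (u j) (u j + N) ∪ {u (j + 1) - 1}) := card_le_card fun k hk => by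
        simp only [R, mem_filter, mem_Icc] at hk
        simp only [mem_union, mem_Icc, mem_singleton]
        omega
    _ ≤ N + 2 := (card_union_le _ _).trans (by simp; omega)
  have hvarR : ∀ j, ∀ n ∈ R j, variance (S n) P / (δ / 2 * A (u j)) ^ 2 ≤
      max K 0 * θ ^ 2 / (δ / 2) ^ 2 * (1 / ψ (θ ^ j)) := by
    intro j n hn
    simp only [R, mem_filter, mem_Icc] at hn
    have hvar_n := hn₀ n (hn₀u.trans ((hu.monotone j.zero_le).trans hn.1.1))
    have hψ_mono := hψ.mul_sq_div_le K (hθj j) ((hu_pow j).trans (hA hn.1.1))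
      (hu_block j n hn.1.1 (by have := hu_succ j; omega)).le
    have := hψ.1 _ (hθj j)
    have := hAu j
    rw [div_le_iff₀ (by positivity)]
    calc variance (S n) P ≤ max K 0 * (θ * A (u j)) ^ 2 / ψ (θ ^ j) := hvar_n.trans hψ_mono
      _ = _ := by field_simp
  have hsum := (hψ.summable_one_div_pow hθ).mul_left (max K 0 * θ ^ 2 / (δ / 2) ^ 2)
  have hES_mono : Monotone fun n => ∫ ω, S n ω ∂P := fun p q h =>
    integral_mono ((hS p).integrable one_le_two) ((hS q).integrable one_le_two)
      fun ω => hS_mono ω h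
  filter_upwards [ae_eventually_forall_mem_abs_sub_integral_lt hS hR
    (fun j => by have := hAu j; positivity) hvarR hsum] with ω hω
  obtain ⟨J, hJ⟩ := eventually_atTop.1 hω
  refine eventually_atTop.2 ⟨u J, fun n hn => ?_⟩
  obtain ⟨j, hjn, hnj⟩ :=
    hu.exists_between_of_tendsto_atTop hu.tendsto_atTop (x := n + 1)
      (by have := hu.monotone J.zero_le; omega)
  have hJj : J ≤ j := Nat.lt_succ_iff.1 (hu.lt_iff_lt.1 (show u J < u (j + 1) by omega))
  have hmean_block : u j + N < u (j + 1) - 1 →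
      ∫ ω, S (u (j + 1) - 1) ω ∂P - ∫ ω, S (u j) ω ∂P ≤ δ / 2 * A (u j) := fun h => calc
    _ ≤ C * (A (u (j + 1) - 1) - A (u j)) := hmean _ _ h
    _ ≤ C * ((θ - 1) * A (u j)) := by
        have := hu_block j (u (j + 1) - 1) (hu_last j) (by omega)
        gcongr
        linarith
    _ = δ / 2 * A (u j) := by rw [← hCθ]; ring
  calc |S n ω - ∫ ω', S n ω' ∂P| ≤ 2 * (δ / 2 * A (u j)) :=
        abs_sub_le_of_checkpoints (hS_mono ω) hES_mono
          (fun k hk₁ hk₂ hk₃ => (hJ j hJj k (by simp only [R, mem_filter, mem_Icc]; omega)).le)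
          hmean_block (by omega) (by omega)
    _ = δ * A (u j) := by ring
    _ ≤ δ * A n := by gcongr; exact hA (by omega)

end

theorem stmt_0 {Ω : Type*} [MeasurableSpace Ω] (P : Measure Ω) [IsProbabilityMeasure P]
    (X : ℕ → Ω → ℝ) (hX : ∀ n, 1 ≤ n → MemLp (X n) 2 P)
    (hXnn : ∀ n, 1 ≤ n → ∀ ω, 0 ≤ X n ω)
    (b : ℕ → ℝ) (hb : ∀ n, 1 ≤ n → 0 < b n)
    (S : ℕ → Ω → ℝ) (hS : ∀ n ω, S n ω = ∑ k ∈ Finset.Icc 1 n, b k * X k ω)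
    (A : ℕ → ℝ) (hA : ∀ n, A n = ∑ k ∈ Finset.Icc 1 n, b k)
    (hAtop : Tendsto A atTop atTop)
    (hmean : ∃ C > (0 : ℝ), ∃ N : ℕ, ∀ m n : ℕ, 1 ≤ m → m ≤ n → N ≤ n - m →
      ∑ k ∈ Finset.Icc m n, b k * ∫ ω, X k ω ∂P ≤ C * ∑ k ∈ Finset.Icc m n, b k)
    (hvar : ∃ ψ : ℝ → ℝ, PsiC ψ ∧ ∃ K : ℝ, ∀ n, 1 ≤ n →
      ∫ ω, |S n ω - ∫ ω', S n ω' ∂P| ^ 2 ∂P ≤ K * (A n) ^ 2 / ψ (A n)) :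
    ∀ᵐ ω ∂P, Tendsto (fun n => (S n ω - ∫ ω', S n ω' ∂P) / A n) atTop (𝓝 0) := by
  obtain ⟨C, hC, N, hmean⟩ := hmean
  obtain ⟨ψ, hψ, K, hvar⟩ := hvar
  have hS_eq : ∀ n, S n = fun ω => ∑ k ∈ Icc 1 n, b k * X k ω := fun n => funext (hS n)
  have hS_L2 : ∀ n, MemLp (S n) 2 P := fun n => by
    rw [hS_eq]
    exact memLp_finsetSum _ fun k hk => (hX k (mem_Icc.1 hk).1).const_mul (b k)
  have hS_mono : ∀ ω, Monotone (S · ω) := fun ω => by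
    simpa only [hS] using monotone_sum_Icc_one (f := fun k => b k * X k ω) fun k hk =>
      mul_nonneg (hb k hk).le (hXnn k hk ω)
  have hA_mono : Monotone A := by
    simpa only [← hA] using monotone_sum_Icc_one fun k hk => (hb k hk).le
  have hES : ∀ n, ∫ ω, S n ω ∂P = ∑ k ∈ Icc 1 n, b k * ∫ ω, X k ω ∂P := fun n => by
    rw [hS_eq, integral_finsetSum _ fun k hk =>
      ((hX k (mem_Icc.1 hk).1).integrable one_le_two).const_mul (b k)]
    simp only [integral_const_mul]
  have hmean' : ∀ p q, p + N < q →
      ∫ ω, S q ω ∂P - ∫ ω, S p ω ∂P ≤ C * (A q - A p) := fun p q hpq => by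
    rw [hES, hES, hA, hA, sum_Icc_one_sub_sum_Icc_one _ (by omega),
      sum_Icc_one_sub_sum_Icc_one _ (by omega)]
    exact hmean (p + 1) q le_add_self (by omega) (by omega)
  have hvar' : ∀ᶠ n in atTop, variance (S n) P ≤ K * A n ^ 2 / ψ (A n) := by
    filter_upwards [eventually_ge_atTop 1] with n hn
    rw [variance_eq_integral (hS_L2 n).aemeasurable]
    simpa only [sq_abs] using hvar n hn
  exact ae_tendsto_div_of_forall_ae_eventually_le (hAtop.eventually_gt_atTop 0) fun δ hδ =>
    ae_eventually_abs_sub_integral_le_mul hS_L2 hS_mono hA_mono hAtop hC hmean' hψ hvar' hδ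
end

section
/- Let (X_n)_{n≥1} be square-integrable random variables with common mean η = E[X_n] for all n, and suppose |E[X_n X_m] − η²| ≤ ρ(|n − m|) for a function ρ : ℕ₀ → [0,∞) with R := Σ_{m=0}^∞ ρ(m) < ∞. Let (b_n)_{n≥1} be a non-decreasing sequence of positive reals, and set S_n = Σ_{k=1}^n b_k X_k and A_n = Σ_{k=1}^n b_k. Then for every n, E[|S_n − E[S_n]|²] ≤ 2 R b_n A_n. -/
/-! Expanding the square, the variance of `S n` is `∑ⱼ ∑ₖ bⱼ bₖ Cov(Xⱼ, Xₖ)`, and each covariance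
is at most `ρ (dist j k)`. Bounding `bⱼ ≤ bₙ` and summing over `j` first, each `k` contributes at
most `bₙ bₖ · 2R`, since every value of `dist j k` is taken at most twice. -/

open MeasureTheory ProbabilityTheory Finset

section SummableWeights

variable {ρ : ℕ → ℝ} {R : ℝ}

lemma sum_comp_le_of_injOn {ι : Type*} (hρ : ∀ m, 0 ≤ ρ m) (hR : HasSum ρ R)
    {s : Finset ι} {f : ι → ℕ} (hf : Set.InjOn f s) : ∑ j ∈ s, ρ (f j) ≤ R := by
  rw [← sum_image hf]
  exact sum_le_hasSum _ (fun m _ => hρ m) hR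

lemma sum_comp_dist_le_two_mul (hρ : ∀ m, 0 ≤ ρ m) (hR : HasSum ρ R) (s : Finset ℕ) (k : ℕ) :
    ∑ j ∈ s, ρ (Nat.dist j k) ≤ 2 * R := by
  rw [← sum_filter_add_sum_filter_not s (· ≤ k), two_mul]
  gcongr <;> refine sum_comp_le_of_injOn hρ hR fun x hx y hy hxy => ?_
  all_goals
    simp only [coe_filter, Set.mem_ofPred_eq] at hx hy
    simp only [Nat.dist] at hxy
    omega

lemma sum_sum_mul_le_two_mul (hρ : ∀ m, 0 ≤ ρ m) (hR : HasSum ρ R)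
    {s : Finset ℕ} {b : ℕ → ℝ} {c : ℕ → ℕ → ℝ} {B : ℝ}
    (hb : ∀ k ∈ s, 0 ≤ b k) (hbB : ∀ k ∈ s, b k ≤ B)
    (hc : ∀ j ∈ s, ∀ k ∈ s, c j k ≤ ρ (Nat.dist j k)) :
    ∑ j ∈ s, ∑ k ∈ s, b j * b k * c j k ≤ 2 * R * B * ∑ k ∈ s, b k := by
  calc ∑ j ∈ s, ∑ k ∈ s, b j * b k * c j k
      ≤ ∑ j ∈ s, ∑ k ∈ s, b j * b k * ρ (Nat.dist j k) := by
        gcongr ∑ j ∈ s, ∑ k ∈ s, _ * ?_ with j hj k hk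
        · exact mul_nonneg (hb j hj) (hb k hk)
        · exact hc j hj k hk
    _ ≤ ∑ j ∈ s, ∑ k ∈ s, B * b k * ρ (Nat.dist j k) := by
        gcongr ∑ j ∈ s, ∑ k ∈ s, ?_ * _ * _ with j hj k hk
        · exact hρ _
        · exact hb k hk
        · exact hbB j hj
    _ = ∑ k ∈ s, B * b k * ∑ j ∈ s, ρ (Nat.dist j k) := by
        rw [sum_comm]
        simp only [mul_sum]
    _ ≤ ∑ k ∈ s, B * b k * (2 * R) := by
        gcongr with k hk
        · exact mul_nonneg ((hb k hk).trans (hbB k hk)) (hb k hk)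
        · exact sum_comp_dist_le_two_mul hρ hR s k
    _ = 2 * R * B * ∑ k ∈ s, b k := by
        rw [mul_sum]
        exact sum_congr rfl fun k _ => by ring

end SummableWeights

lemma ProbabilityTheory.covariance_fun_sum_mul_self {Ω ι : Type*} [MeasurableSpace Ω]
    {μ : Measure Ω} [IsFiniteMeasure μ] {X : ι → Ω → ℝ} {s : Finset ι} (b : ι → ℝ)
    (hX : ∀ i ∈ s, MemLp (X i) 2 μ) :
    cov[fun ω ↦ ∑ i ∈ s, b i * X i ω, fun ω ↦ ∑ i ∈ s, b i * X i ω; μ]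
      = ∑ i ∈ s, ∑ j ∈ s, b i * b j * cov[X i, X j; μ] := by
  have hbX : ∀ i ∈ s, MemLp (fun ω ↦ b i * X i ω) 2 μ := fun i hi => (hX i hi).const_mul (b i)
  rw [covariance_fun_sum_fun_sum' hbX hbX]
  refine sum_congr rfl fun i _ => sum_congr rfl fun j _ => ?_
  rw [covariance_const_mul_left, covariance_const_mul_right]
  ring

theorem stmt_2 {Ω : Type*} [MeasurableSpace Ω] (P : Measure Ω) [IsProbabilityMeasure P]
    (X : ℕ → Ω → ℝ) (hX : ∀ n, 1 ≤ n → MemLp (X n) 2 P)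
    (η : ℝ) (hη : ∀ n, 1 ≤ n → ∫ ω, X n ω ∂P = η)
    (ρ : ℕ → ℝ) (hρnn : ∀ m, 0 ≤ ρ m)
    (hcorr : ∀ m n : ℕ, 1 ≤ m → 1 ≤ n →
      |(∫ ω, X n ω * X m ω ∂P) - η ^ 2| ≤ ρ (Nat.dist n m))
    (R : ℝ) (hR : HasSum ρ R)
    (b : ℕ → ℝ) (hbpos : ∀ n, 1 ≤ n → 0 < b n)
    (hbmono : ∀ m n, 1 ≤ m → m ≤ n → b m ≤ b n)
    (S : ℕ → Ω → ℝ) (hS : ∀ n ω, S n ω = ∑ k ∈ Finset.Icc 1 n, b k * X k ω)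
    (A : ℕ → ℝ) (hA : ∀ n, A n = ∑ k ∈ Finset.Icc 1 n, b k) :
    ∀ n, 1 ≤ n →
      ∫ ω, |S n ω - ∫ ω', S n ω' ∂P| ^ 2 ∂P ≤ 2 * R * b n * A n := by
  intro n _
  have hXI : ∀ k ∈ Icc 1 n, MemLp (X k) 2 P := fun k hk => hX k (mem_Icc.mp hk).1
  have hvar : ∫ ω, |S n ω - ∫ ω', S n ω' ∂P| ^ 2 ∂P
      = ∑ j ∈ Icc 1 n, ∑ k ∈ Icc 1 n, b j * b k * cov[X j, X k; P] := by
    simp_rw [sq_abs, sq]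
    rw [funext (hS n)]
    exact covariance_fun_sum_mul_self b hXI
  have hcov : ∀ j ∈ Icc 1 n, ∀ k ∈ Icc 1 n, cov[X j, X k; P] ≤ ρ (Nat.dist j k) := by
    intro j hj k hk
    have hj1 := (mem_Icc.mp hj).1
    have hk1 := (mem_Icc.mp hk).1
    rw [covariance_eq_sub (hX j hj1) (hX k hk1), hη j hj1, hη k hk1, ← sq]
    exact (le_abs_self _).trans (hcorr k j hk1 hj1)
  rw [hvar, hA]
  exact sum_sum_mul_le_two_mul hρnn hR (fun k hk => (hbpos k (mem_Icc.mp hk).1).le)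
    (fun k hk => hbmono k n (mem_Icc.mp hk).1 (mem_Icc.mp hk).2) hcov
end

section
/- Fix γ ∈ (0,1) and define the sequence of positive weights b_1 = 1 and b_n = (1 − γ) γ^{−(n−1)} for n ≥ 2 (these are the weights for which exponential moving averaging with factor γ and initialization at the first observation satisfies τ̂_n = (1/A_n) Σ_{k=1}^n b_k τ̃_k, where A_n = Σ_{k=1}^n b_k = γ^{−(n−1)}). Then (b_n)_{n≥1} is not an averaging scheme; that is, there is no ψ ∈ Ψ_c such that b_n ≤ A_n/ψ(A_n) holds for all sufficiently large n. -/
open Filter MeasureTheory Topology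

namespace PsiC

variable {ψ : ℝ → ℝ}

theorem exists_lt (hψ : PsiC ψ) (C : ℝ) : ∃ x, 0 < x ∧ C < ψ x := by
  obtain ⟨hpos, -, hsum⟩ := hψ
  by_contra! hle
  have hC : 0 < C := (hpos 1 one_pos).trans_le (hle 1 one_pos)
  have hharmonic : Summable fun n : ℕ => C⁻¹ * (1 / ((n : ℝ) + 1)) := by
    refine hsum.of_nonneg_of_le (fun n => by positivity) fun n => ?_
    have hn : (0 : ℝ) < n + 1 := by positivity
    rw [← one_div, div_mul_div_comm, one_mul, mul_comm]
    exact one_div_le_one_div_of_le (mul_pos hn (hpos _ hn))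
      (mul_le_mul_of_nonneg_left (hle _ hn) hn.le)
  refine Real.not_summable_one_div_natCast ((summable_nat_add_iff 1).mp ?_)
  simpa using (summable_mul_left_iff (inv_ne_zero hC.ne')).mp hharmonic

theorem tendsto_atTop (hψ : PsiC ψ) : Tendsto ψ atTop atTop := by
  refine tendsto_atTop_atTop.mpr fun C => ?_
  obtain ⟨x₀, hx₀, hC⟩ := hψ.exists_lt C
  exact ⟨x₀, fun x hx => hC.le.trans (hψ.2.1 hx₀ (hx₀.trans_le hx) hx)⟩

end PsiC

theorem tendsto_zpow_neg_sub_one_atTop {γ : ℝ} (hγ₀ : 0 < γ) (hγ₁ : γ < 1) :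
    Tendsto (fun n : ℕ => γ ^ (-((n : ℤ) - 1))) atTop atTop := by
  have hexp (n : ℕ) : γ ^ (-((n : ℤ) - 1)) = γ * γ⁻¹ ^ n := by
    rw [neg_sub, zpow_sub₀ hγ₀.ne', zpow_one, zpow_natCast, inv_pow, div_eq_mul_inv]
  simp only [hexp]
  exact (tendsto_pow_atTop_atTop_of_one_lt ((one_lt_inv₀ hγ₀).mpr hγ₁)).const_mul_atTop
    hγ₀

theorem sum_Icc_ema_weights {γ : ℝ} (hγ : γ ≠ 0) {b : ℕ → ℝ} (hb1 : b 1 = 1)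
    (hbn : ∀ n : ℕ, 2 ≤ n → b n = (1 - γ) * γ ^ (-((n : ℤ) - 1))) {n : ℕ}
    (hn : 1 ≤ n) :
    ∑ k ∈ Finset.Icc 1 n, b k = γ ^ (-((n : ℤ) - 1)) := by
  induction n, hn using Nat.le_induction with
  | base => simp [hb1]
  | succ n hn ih =>
    rw [Finset.sum_Icc_succ_top (by omega), ih, hbn (n + 1) (by omega)]
    have hexp : -((n : ℤ) - 1) = 1 + -(((n + 1 : ℕ) : ℤ) - 1) := by push_cast; ring
    rw [hexp, zpow_add₀ hγ, zpow_one]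
    ring

/-- The EMA weights `b_1 = 1`, `b_n = (1-γ)γ^{-(n-1)}` for `n ≥ 2` do not form an
averaging scheme: there is no `ψ ∈ Ψ_c` with `b_n ≤ A_n / ψ(A_n)` for all large `n`. -/
theorem stmt_3 (γ : ℝ) (hγ : γ ∈ Set.Ioo (0 : ℝ) 1)
    (b : ℕ → ℝ) (hb1 : b 1 = 1)
    (hbn : ∀ n : ℕ, 2 ≤ n → b n = (1 - γ) * γ ^ (-((n : ℤ) - 1))) :
    ¬ ∃ ψ : ℝ → ℝ, PsiC ψ ∧ ∀ᶠ n : ℕ in atTop,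
        b n ≤ (∑ k ∈ Finset.Icc 1 n, b k) / ψ (∑ k ∈ Finset.Icc 1 n, b k) := by
  rintro ⟨ψ, hψ, hev⟩
  obtain ⟨hγ₀, hγ₁⟩ := hγ
  set A : ℕ → ℝ := fun n => γ ^ (-((n : ℤ) - 1))
  have hbounded : ∀ᶠ n in atTop, ψ (A n) ≤ 1 / (1 - γ) := by
    filter_upwards [hev, eventually_ge_atTop 2] with n hle hn
    have hA : 0 < A n := zpow_pos hγ₀ _
    rw [sum_Icc_ema_weights hγ₀.ne' hb1 hbn (by omega), hbn n hn,
      le_div_iff₀ (hψ.1 _ hA)] at hle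
    rw [le_div_iff₀ (by linarith)]
    nlinarith
  have hlarge : ∀ᶠ n in atTop, 1 / (1 - γ) < ψ (A n) :=
    (hψ.tendsto_atTop.comp (tendsto_zpow_neg_sub_one_atTop hγ₀ hγ₁)).eventually_gt_atTop _
  obtain ⟨n, hle, hlt⟩ := (hbounded.and hlarge).exists
  exact (hle.trans_lt hlt).false
end

section
/- Let p ∈ (1/2, 1] and define β_k = k^{−p} Π_{s=2}^{k} (1 − s^{−p})^{−1} and Λ_n = Σ_{k=1}^n β_k. Then there exists ε > 0 such that for all sufficiently large n, β_n ≤ Λ_n / (log Λ_n)^{1+ε}. In particular, (β_n)_{n≥1} is an averaging scheme with ψ(x) = (log x)^{1+ε}. -/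
open Filter MeasureTheory Topology

/-- A non-decreasing sequence `(b_n)_{n≥1}` of positive reals is an averaging scheme if
there is `ψ ∈ Ψ_c` with `b_n ≤ A_n / ψ(A_n)` for all sufficiently large `n`,
where `A_n = ∑_{k=1}^n b_k`. -/
def IsAveragingScheme (b : ℕ → ℝ) : Prop :=
  (∀ n, 1 ≤ n → 0 < b n) ∧ (∀ m n, 1 ≤ m → m ≤ n → b m ≤ b n) ∧
    ∃ ψ : ℝ → ℝ, PsiC ψ ∧ ∀ᶠ n : ℕ in atTop,
      b n ≤ (∑ k ∈ Finset.Icc 1 n, b k) / ψ (∑ k ∈ Finset.Icc 1 n, b k)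

/-!
Write `Π_n = ∏_{s=2}^n (1 - s^{-p})⁻¹`, so `β_n = n^{-p} Π_n`. Since
`Π_{n+1} - Π_n = (n+1)^{-p} Π_{n+1}`, the partial sums telescope to `Λ_n = Π_n`, hence
`β_n = Λ_n / n^p`. Each factor satisfies `log (1 - s^{-p})⁻¹ ≤ 4 s^{-p} ≤ 4 / √s`, so
`log Λ_n ≤ 8 √n` and `(log Λ_n)^{p + 1/2} = O(n^{(p + 1/2)/2}) ≤ n^p` eventually, because
`p > 1/2`; this gives `ε = p - 1/2`. Monotonicity of `β` is the subadditivity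
`(k+1)^p ≤ k^p + 1` for `p ≤ 1`, and `ψ(x) = max 1 (log x)^{1+ε}` lies in `Ψ_c` by Cauchy
condensation.
-/

open Real Finset

lemma log_inv_one_sub_le {x : ℝ} (hx0 : 0 ≤ x) (hx : x ≤ 3 / 4) : log (1 - x)⁻¹ ≤ 4 * x := by
  have h4 : (1 - x)⁻¹ ≤ 4 := by
    rw [inv_le_comm₀ (by linarith) (by norm_num)]; linarith
  calc log (1 - x)⁻¹ ≤ (1 - x)⁻¹ - 1 := log_le_sub_one_of_pos (by rw [inv_pos]; linarith)
    _ = x * (1 - x)⁻¹ := by field_simp [show 1 - x ≠ 0 by linarith]; ring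
    _ ≤ 4 * x := by nlinarith

lemma rpow_neg_le_inv_sqrt {p x : ℝ} (hp : 1 / 2 ≤ p) (hx : 1 ≤ x) : x ^ (-p) ≤ (√x)⁻¹ := by
  rw [sqrt_eq_rpow, ← rpow_neg (by linarith)]
  exact rpow_le_rpow_of_exponent_le hx (by linarith)

lemma inv_sqrt_le_three_quarters {x : ℝ} (hx : 2 ≤ x) : (√x)⁻¹ ≤ 3 / 4 := by
  have : (4 / 3 : ℝ) ≤ √x := le_sqrt_of_sq_le (by linarith)
  rw [inv_le_comm₀ (by positivity) (by norm_num)]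
  linarith

lemma sum_Icc_inv_sqrt_le (n : ℕ) : ∑ s ∈ Icc 1 n, (√(s : ℝ))⁻¹ ≤ 2 * √n := by
  induction n with
  | zero => simp
  | succ n ih =>
    rw [sum_Icc_succ_top (by omega)]
    have hpos : 0 < √((n : ℝ) + 1) := sqrt_pos.mpr (by positivity)
    have step : (√((n : ℝ) + 1))⁻¹ ≤ 2 * √((n : ℝ) + 1) - 2 * √n := by
      rw [inv_le_iff_one_le_mul₀ hpos]
      nlinarith [sq_sqrt (show (0 : ℝ) ≤ n + 1 by positivity),
        sq_sqrt (Nat.cast_nonneg (α := ℝ) n), sq_nonneg (√((n : ℝ) + 1) - √n)]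
    push_cast
    linarith

lemma rpow_neg_le_rpow_neg_add_one_mul_inv {p x : ℝ} (hp0 : 0 < p) (hp1 : p ≤ 1) (hx : 0 < x) :
    x ^ (-p) ≤ (x + 1) ^ (-p) * (1 - (x + 1) ^ (-p))⁻¹ := by
  have hsub : (x + 1) ^ p ≤ x ^ p + 1 := by
    simpa using rpow_add_le_add_rpow hx.le zero_le_one hp0.le hp1
  have hgt : 1 < (x + 1) ^ p := one_lt_rpow (by linarith) hp0
  have hxp : 0 < x ^ p := rpow_pos_of_pos hx p
  rw [rpow_neg hx.le, rpow_neg (by linarith)]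
  calc (x ^ p)⁻¹ ≤ ((x + 1) ^ p - 1)⁻¹ := inv_anti₀ (by linarith) (by linarith)
    _ = ((x + 1) ^ p)⁻¹ * (1 - ((x + 1) ^ p)⁻¹)⁻¹ := by
      rw [← mul_inv]; congr 1; field_simp

lemma eventually_mul_sqrt_rpow_le_rpow {p : ℝ} (hp : 1 / 2 < p) {C : ℝ} (hC : 0 ≤ C) :
    ∀ᶠ n : ℕ in atTop, (C * √n) ^ (p + 1 / 2) ≤ (n : ℝ) ^ p := by
  have hδ : 0 < p / 2 - 1 / 4 := by linarith
  have hlarge : Tendsto (fun n : ℕ => (n : ℝ) ^ (p / 2 - 1 / 4)) atTop atTop :=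
    (tendsto_rpow_atTop hδ).comp tendsto_natCast_atTop_atTop
  filter_upwards [hlarge.eventually_ge_atTop (C ^ (p + 1 / 2)), eventually_ge_atTop 1]
    with n hCn hn
  have hn0 : (0 : ℝ) < n := by exact_mod_cast hn
  calc (C * √n) ^ (p + 1 / 2) = C ^ (p + 1 / 2) * (n : ℝ) ^ (1 / 2 * (p + 1 / 2)) := by
        rw [mul_rpow hC (sqrt_nonneg _), sqrt_eq_rpow, ← rpow_mul hn0.le]
    _ ≤ (n : ℝ) ^ (p / 2 - 1 / 4) * (n : ℝ) ^ (1 / 2 * (p + 1 / 2)) := by gcongr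
    _ = (n : ℝ) ^ p := by rw [← rpow_add hn0]; ring_nf

lemma summable_one_div_mul_max_one_log_rpow {q : ℝ} (hq : 1 < q) :
    Summable fun n : ℕ => 1 / ((n : ℝ) * max 1 (log n) ^ q) := by
  have hmax : ∀ y : ℝ, 0 < max 1 y ^ q := fun y => rpow_pos_of_pos (by positivity) q
  rw [← summable_condensed_iff_of_nonneg (fun n => by have := hmax (log n); positivity)
    fun m n hm hmn => by
      have := hmax (log m)
      gcongr]
  have hcond : ∀ k : ℕ, (2 : ℝ) ^ k * (1 / ((2 ^ k : ℕ) * max 1 (log (2 ^ k : ℕ)) ^ q)) =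
      1 / max 1 (k * log 2) ^ q := by
    intro k
    push_cast
    rw [log_pow]
    field_simp
  simp_rw [hcond]
  refine .of_norm_bounded_eventually_nat (g := fun k : ℕ => (k : ℝ) ^ (-q) * (log 2) ^ (-q))
    ((summable_nat_rpow.mpr (by linarith)).mul_right _) ?_
  filter_upwards [eventually_ge_atTop 1] with k hk
  have hk0 : (0 : ℝ) < k := by exact_mod_cast hk
  rw [norm_of_nonneg (by have := hmax (k * log 2); positivity),
    ← mul_rpow hk0.le (log_pos one_lt_two).le, rpow_neg (by positivity), one_div]
  gcongr
  exact le_max_right _ _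

lemma psiC_max_one_log_rpow {q : ℝ} (hq : 1 < q) : PsiC fun x => max 1 (log x) ^ q := by
  refine ⟨fun x _ => rpow_pos_of_pos (by positivity) q, fun x hx y _ hxy => ?_, ?_⟩
  · dsimp only
    gcongr
  · simpa using (summable_nat_add_iff 1).mpr (summable_one_div_mul_max_one_log_rpow hq)

lemma mul_le_sum_Icc_of_monotone {b : ℕ → ℝ} (hb : Monotone b) (n : ℕ) :
    n * b 1 ≤ ∑ k ∈ Icc 1 n, b k := by
  simpa using card_nsmul_le_sum (Icc 1 n) b (b 1) fun k hk => hb (mem_Icc.mp hk).1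

lemma natCast_rpow_neg_lt_one {p : ℝ} (hp : 0 < p) {s : ℕ} (hs : 2 ≤ s) : (s : ℝ) ^ (-p) < 1 :=
  rpow_lt_one_of_one_lt_of_neg (by exact_mod_cast hs) (by linarith)

/-- The product `Π_n` with `β_k = k^{-p} Π_k`. -/
noncomputable def invOneSubProd (p : ℝ) (n : ℕ) : ℝ := ∏ s ∈ Icc 2 n, (1 - (s : ℝ) ^ (-p))⁻¹

namespace invOneSubProd

variable {p : ℝ}

lemma pos (hp : 0 < p) (n : ℕ) : 0 < invOneSubProd p n :=
  prod_pos fun _ hs => inv_pos.mpr (sub_pos.mpr (natCast_rpow_neg_lt_one hp (mem_Icc.mp hs).1))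

lemma succ {n : ℕ} (hn : 1 ≤ n) :
    invOneSubProd p (n + 1) = invOneSubProd p n * (1 - ((n : ℝ) + 1) ^ (-p))⁻¹ := by
  rw [invOneSubProd, prod_Icc_succ_top (by omega)]
  push_cast
  rfl

lemma one : invOneSubProd p 1 = 1 := rfl

lemma sum_rpow_neg_mul (hp : 0 < p) {n : ℕ} (hn : 1 ≤ n) :
    ∑ k ∈ Icc 1 n, (k : ℝ) ^ (-p) * invOneSubProd p k = invOneSubProd p n := by
  induction n, hn using Nat.le_induction with
  | base => simp [one]
  | succ n hn ih =>
    have hne : 1 - ((n : ℝ) + 1) ^ (-p) ≠ 0 :=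
      (sub_pos.mpr (by exact_mod_cast natCast_rpow_neg_lt_one hp (by omega : 2 ≤ n + 1))).ne'
    rw [sum_Icc_succ_top (by omega), ih, succ hn]
    push_cast
    field_simp
    ring

lemma log_le (hp : 1 / 2 < p) (n : ℕ) : log (invOneSubProd p n) ≤ 8 * √n := by
  have hfactor : ∀ s ∈ Icc 2 n, log (1 - (s : ℝ) ^ (-p))⁻¹ ≤ 4 * (√(s : ℝ))⁻¹ := fun s hs => by
    have hs2 : (2 : ℝ) ≤ s := by exact_mod_cast (mem_Icc.mp hs).1
    have hx := rpow_neg_le_inv_sqrt hp.le (by linarith : (1 : ℝ) ≤ s)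
    calc log (1 - (s : ℝ) ^ (-p))⁻¹ ≤ 4 * (s : ℝ) ^ (-p) :=
          log_inv_one_sub_le (by positivity) (hx.trans (inv_sqrt_le_three_quarters hs2))
      _ ≤ 4 * (√(s : ℝ))⁻¹ := by gcongr
  rw [invOneSubProd, log_prod fun s hs => (inv_pos.mpr (sub_pos.mpr
    (natCast_rpow_neg_lt_one (by linarith) (mem_Icc.mp hs).1))).ne']
  calc ∑ s ∈ Icc 2 n, log (1 - (s : ℝ) ^ (-p))⁻¹ ≤ ∑ s ∈ Icc 2 n, 4 * (√(s : ℝ))⁻¹ :=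
        sum_le_sum hfactor
    _ ≤ ∑ s ∈ Icc 1 n, 4 * (√(s : ℝ))⁻¹ :=
        sum_le_sum_of_subset_of_nonneg (Icc_subset_Icc_left one_le_two) fun _ _ _ => by positivity
    _ ≤ 8 * √n := by rw [← mul_sum]; linarith [sum_Icc_inv_sqrt_le n]

lemma monotone_rpow_neg_mul (hp0 : 0 < p) (hp1 : p ≤ 1) :
    Monotone fun k : ℕ => (k : ℝ) ^ (-p) * invOneSubProd p k := by
  refine monotone_nat_of_le_succ fun k => ?_
  rcases Nat.eq_zero_or_pos k with rfl | hk
  · simp [zero_rpow (neg_ne_zero.mpr hp0.ne'), one]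
  · rw [succ hk]
    push_cast
    calc (k : ℝ) ^ (-p) * invOneSubProd p k
        ≤ ((k : ℝ) + 1) ^ (-p) * (1 - ((k : ℝ) + 1) ^ (-p))⁻¹ * invOneSubProd p k := by
          gcongr
          · exact (pos hp0 k).le
          · exact rpow_neg_le_rpow_neg_add_one_mul_inv hp0 hp1 (by exact_mod_cast hk)
      _ = _ := by ring

end invOneSubProd

theorem stmt_6 (p : ℝ) (hp0 : 1 / 2 < p) (hp1 : p ≤ 1)
    (β : ℕ → ℝ)
    (hβ : ∀ k : ℕ, β k = (k : ℝ) ^ (-p) * ∏ s ∈ Finset.Icc 2 k, (1 - (s : ℝ) ^ (-p))⁻¹)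
    (Λ : ℕ → ℝ) (hΛ : ∀ n : ℕ, Λ n = ∑ k ∈ Finset.Icc 1 n, β k) :
    (∃ ε > (0 : ℝ), ∀ᶠ n : ℕ in atTop, β n ≤ Λ n / Real.log (Λ n) ^ (1 + ε)) ∧
      IsAveragingScheme β := by
  have hp : 0 < p := by linarith
  have hΛ_eq : ∀ n, 1 ≤ n → Λ n = invOneSubProd p n := fun n hn => by
    rw [hΛ, ← invOneSubProd.sum_rpow_neg_mul hp hn]
    exact sum_congr rfl fun k _ => hβ k
  have hβ_eq : ∀ n, 1 ≤ n → β n = (n : ℝ) ^ (-p) * Λ n := fun n hn => by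
    rw [hβ, hΛ_eq n hn, invOneSubProd]
  have hmono : Monotone β := (funext hβ).symm ▸ invOneSubProd.monotone_rpow_neg_mul hp hp1
  have hn_le : ∀ n : ℕ, (n : ℝ) ≤ Λ n := fun n => by
    simpa [hΛ, hβ] using mul_le_sum_Icc_of_monotone hmono n
  have hΛ_tendsto : Tendsto Λ atTop atTop := tendsto_atTop_mono hn_le tendsto_natCast_atTop_atTop
  have hlog_ge_one : ∀ᶠ n : ℕ in atTop, 1 ≤ log (Λ n) :=
    (tendsto_log_atTop.comp hΛ_tendsto).eventually_ge_atTop 1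
  have hbound : ∀ᶠ n : ℕ in atTop, β n ≤ Λ n / log (Λ n) ^ (p + 1 / 2) := by
    filter_upwards [eventually_mul_sqrt_rpow_le_rpow hp0 (by norm_num : (0 : ℝ) ≤ 8), hlog_ge_one,
      eventually_ge_atTop 1] with n hn hlog hn1
    have hlogΛ : log (Λ n) ^ (p + 1 / 2) ≤ (n : ℝ) ^ p :=
      (rpow_le_rpow (by linarith) ((hΛ_eq n hn1).symm ▸ invOneSubProd.log_le hp0 n)
        (by linarith)).trans hn
    rw [hβ_eq n hn1, rpow_neg (Nat.cast_nonneg n), inv_mul_eq_div]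
    gcongr
    exact (Nat.cast_nonneg n).trans (hn_le n)
  refine ⟨⟨p - 1 / 2, by linarith, by rwa [show 1 + (p - 1 / 2) = p + 1 / 2 by ring]⟩,
    fun n hn => ?_, fun m n _ hmn => hmono hmn,
    fun x => max 1 (log x) ^ (p + 1 / 2), psiC_max_one_log_rpow (by linarith), ?_⟩
  · rw [hβ_eq n hn, hΛ_eq n hn]
    exact mul_pos (rpow_pos_of_pos (by exact_mod_cast hn) _) (invOneSubProd.pos hp n)
  · filter_upwards [hbound, hlog_ge_one] with n hn hlog
    rwa [← hΛ, max_eq_right hlog]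
end

section
/- Let p ∈ (1/2, 1] and define Λ_n = Σ_{k=1}^n β_k with β_k = k^{−p} Π_{s=2}^{k} (1 − s^{−p})^{−1}, and define Λ̃ : (0,∞) → ℝ by Λ̃(y) = ∫_2^{y+1} s^{−p} exp( ∫_2^{s+1} log( τ^p / (τ^p − 1) ) dτ ) ds. Then Λ̃ is monotonically increasing on (0,∞), and there exist constants c_a ∈ ℝ and c_m > 0 such that Λ_n ≤ c_m (c_a + Λ̃(n)) for all n ≥ 1. -/
open Filter MeasureTheory Topology

namespace Stmt7Aux

noncomputable def g (p τ : ℝ) : ℝ := Real.log (τ ^ p / (τ ^ p - 1))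

noncomputable def F (p s : ℝ) : ℝ :=
  s ^ (-p) * Real.exp (∫ τ in (2:ℝ)..(s + 1), g p τ)

lemma one_lt_rpow {p x : ℝ} (hp : 0 < p) (hx : 1 < x) : 1 < x ^ p :=
  (Real.one_lt_rpow_iff_of_pos (by linarith)).mpr (Or.inl ⟨hx, hp⟩)

lemma g_nonneg {p τ : ℝ} (hp : 0 < p) (hτ : 1 < τ) : 0 ≤ g p τ := by
  have h := one_lt_rpow hp hτ
  apply Real.log_nonneg
  rw [le_div_iff₀ (by linarith)]
  linarith

lemma g_cont {p τ : ℝ} (hp : 0 < p) (hτ : 1 < τ) : ContinuousAt (g p) τ := by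
  have h1 : 1 < τ ^ p := one_lt_rpow hp hτ
  have hc : ContinuousAt (fun x : ℝ => x ^ p) τ :=
    Real.continuousAt_rpow_const τ p (Or.inl (by linarith))
  exact (hc.div (hc.sub continuousAt_const)
      (by show τ ^ p - 1 ≠ 0; exact ne_of_gt (by linarith))).log
    (ne_of_gt (show (0:ℝ) < τ ^ p / (τ ^ p - 1) from div_pos (by linarith) (by linarith)))

lemma g_anti {p : ℝ} (hp : 0 < p) : AntitoneOn (g p) (Set.Ioi 1) := by
  intro x hx y hy hxy
  have hx' : (1:ℝ) < x := hx
  have hy' : (1:ℝ) < y := hy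
  have hx1 : 1 < x ^ p := one_lt_rpow hp hx'
  have hy1 : 1 < y ^ p := one_lt_rpow hp hy'
  have hxyp : x ^ p ≤ y ^ p := Real.rpow_le_rpow (by linarith) hxy hp.le
  unfold g
  rw [Real.log_le_log_iff (div_pos (by linarith) (by linarith))
    (div_pos (by linarith) (by linarith)), div_le_div_iff₀ (by linarith) (by linarith)]
  nlinarith

lemma g_intInt {p a b : ℝ} (hp : 0 < p) (ha : 1 < a) (hb : 1 < b) :
    IntervalIntegrable (g p) volume a b := by
  apply ContinuousOn.intervalIntegrable
  intro x hx
  have h1 : 1 < min a b := lt_min ha hb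
  exact (g_cont hp (lt_of_lt_of_le h1 hx.1)).continuousWithinAt

lemma G_mono {p : ℝ} (hp : 0 < p) {x y : ℝ} (hx : 1 < x) (hy : 1 < y) (hxy : x ≤ y) :
    (∫ τ in (2:ℝ)..x, g p τ) ≤ ∫ τ in (2:ℝ)..y, g p τ := by
  have hadd := intervalIntegral.integral_add_adjacent_intervals
    (g_intInt hp one_lt_two hx) (g_intInt hp hx hy)
  have hnn : 0 ≤ ∫ τ in x..y, g p τ :=
    intervalIntegral.integral_nonneg hxy fun u hu => g_nonneg hp (lt_of_lt_of_le hx hu.1)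
  linarith

lemma F_nonneg {p x : ℝ} (hx : 0 ≤ x) : 0 ≤ F p x :=
  mul_nonneg (Real.rpow_nonneg hx _) (Real.exp_pos _).le

lemma F_intInt {p a b : ℝ} (hp : 0 < p) (ha : 1 < a) (hb : 1 < b) :
    IntervalIntegrable (F p) volume a b := by
  have h1 : 1 < min a b := lt_min ha hb
  have hmono : MonotoneOn (fun s : ℝ => Real.exp (∫ τ in (2:ℝ)..(s + 1), g p τ))
      (Set.uIcc a b) := by
    intro x hx y hy hxy
    have hx1 : 1 < x := lt_of_lt_of_le h1 hx.1
    have hy1 : 1 < y := lt_of_lt_of_le h1 hy.1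
    exact Real.exp_le_exp.mpr (G_mono hp (by linarith) (by linarith) (by linarith))
  have hcont : ContinuousOn (fun s : ℝ => s ^ (-p)) (Set.uIcc a b) := by
    intro x hx
    have hx1 : 1 < x := lt_of_lt_of_le h1 hx.1
    exact (Real.continuousAt_rpow_const x (-p) (Or.inl (by linarith))).continuousWithinAt
  exact hmono.intervalIntegrable.continuousOn_mul hcont


lemma prod_eq_exp {p : ℝ} (hp : 0 < p) (k : ℕ) :
    ∏ s ∈ Finset.Icc 2 k, (1 - (s:ℝ) ^ (-p))⁻¹
      = Real.exp (∑ s ∈ Finset.Icc 2 k, g p (s:ℝ)) := by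
  rw [Real.exp_sum]
  apply Finset.prod_congr rfl
  intro s hs
  have hs2 : 2 ≤ s := (Finset.mem_Icc.mp hs).1
  have hs1 : (1:ℝ) < (s:ℝ) := by exact_mod_cast Nat.lt_of_lt_of_le one_lt_two hs2
  have hsp : 1 < (s:ℝ) ^ p := one_lt_rpow hp hs1
  rw [g, Real.exp_log (div_pos (by linarith) (by linarith)),
    Real.rpow_neg (by positivity)]
  have h1 : (s:ℝ) ^ p ≠ 0 := by positivity
  have h2 : (s:ℝ) ^ p - 1 ≠ 0 := ne_of_gt (by linarith)
  field_simp

lemma sum_le_int {p : ℝ} (hp : 0 < p) {k : ℕ} (hk : 2 ≤ k) :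
    (∑ s ∈ Finset.Icc 2 k, g p (s:ℝ)) ≤
      g p 2 + ∫ τ in (2:ℝ)..((k:ℝ)+1), g p τ := by
  have hanti : AntitoneOn (g p) (Set.Icc (2:ℝ) (2 + (k - 1 : ℕ))) :=
    (g_anti hp).mono (fun x hx => lt_of_lt_of_le one_lt_two hx.1)
  have hint := hanti.sum_le_integral
  have hcast : (2:ℝ) + ((k - 1 : ℕ):ℝ) = (k:ℝ) + 1 := by
    have : ((k - 1 : ℕ):ℝ) = (k:ℝ) - 1 := by
      rw [Nat.cast_sub (by omega)]; norm_num
    rw [this]; ring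
  rw [hcast] at hint
  -- rewrite LHS sum
  have hL : (∑ s ∈ Finset.Icc 2 k, g p (s:ℝ))
      = ∑ i ∈ Finset.range (k - 1), g p ((2 + i : ℕ):ℝ) := by
    rw [← Finset.Ico_add_one_right_eq_Icc, Finset.sum_Ico_eq_sum_range]
    rfl
  have hsplit : ∑ i ∈ Finset.range (k - 1), g p ((2 + i : ℕ):ℝ)
      = (∑ i ∈ Finset.range (k - 2), g p ((2 + (i + 1) : ℕ):ℝ)) + g p ((2 + 0 : ℕ):ℝ) := by
    have : k - 1 = (k - 2) + 1 := by omega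
    rw [this, Finset.sum_range_succ']
  have hmono : (∑ i ∈ Finset.range (k - 2), g p ((2 + (i + 1) : ℕ):ℝ))
      ≤ ∑ i ∈ Finset.range (k - 1), g p ((2 + (i + 1) : ℕ):ℝ) := by
    apply Finset.sum_le_sum_of_subset_of_nonneg
    · exact Finset.range_subset_range.mpr (by omega)
    · intro i _ _
      apply g_nonneg hp
      have : (1:ℕ) < 2 + (i + 1) := by omega
      exact_mod_cast this
  have heq : ∑ i ∈ Finset.range (k - 1), g p ((2 + (i + 1) : ℕ):ℝ)
      = ∑ i ∈ Finset.range (k - 1), g p (2 + ((i + 1 : ℕ):ℝ)) := by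
    apply Finset.sum_congr rfl
    intro i _
    congr 1
    push_cast
    ring
  have h20 : g p ((2 + 0 : ℕ):ℝ) = g p 2 := by norm_num
  rw [hL, hsplit, h20]
  have := le_trans hmono (le_of_eq heq)
  linarith [le_trans this hint]

lemma beta_bound {p : ℝ} (hp : 0 < p) {k : ℕ} (hk : 2 ≤ k) :
    (k:ℝ) ^ (-p) * ∏ s ∈ Finset.Icc 2 k, (1 - (s:ℝ) ^ (-p))⁻¹ ≤
      (2:ℝ) ^ p * Real.exp (g p 2) * ∫ s in (k:ℝ)..((k:ℝ)+1), F p s := by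
  have hK2 : (2:ℝ) ≤ (k:ℝ) := by exact_mod_cast hk
  have hK1 : (1:ℝ) < (k:ℝ) := by linarith
  -- lower bound for the integral
  have hlow : ((k:ℝ)+1) ^ (-p) * Real.exp (∫ τ in (2:ℝ)..((k:ℝ)+1), g p τ)
      ≤ ∫ s in (k:ℝ)..((k:ℝ)+1), F p s := by
    have h := intervalIntegral.integral_mono_on (by linarith : (k:ℝ) ≤ (k:ℝ)+1)
      (intervalIntegrable_const
        (c := ((k:ℝ)+1) ^ (-p) * Real.exp (∫ τ in (2:ℝ)..((k:ℝ)+1), g p τ)))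
      (F_intInt hp (by linarith) (by linarith))
      (fun x hx => ?_)
    · rw [intervalIntegral.integral_const] at h
      simpa using h
    · have hx1 : (k:ℝ) ≤ x := hx.1
      have hx2 : x ≤ (k:ℝ)+1 := hx.2
      have h1 : ((k:ℝ)+1) ^ (-p) ≤ x ^ (-p) :=
        Real.rpow_le_rpow_of_nonpos (by linarith) hx2 (by linarith)
      have h2 : Real.exp (∫ τ in (2:ℝ)..((k:ℝ)+1), g p τ)
          ≤ Real.exp (∫ τ in (2:ℝ)..(x+1), g p τ) :=
        Real.exp_le_exp.mpr (G_mono hp (by linarith) (by linarith) (by linarith))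
      exact mul_le_mul h1 h2 (Real.exp_pos _).le (Real.rpow_nonneg (by linarith) _)
  -- k^{-p} ≤ 2^p (k+1)^{-p}
  have hKp : (k:ℝ) ^ (-p) ≤ 2 ^ p * ((k:ℝ)+1) ^ (-p) := by
    have h2K : ((k:ℝ)+1) ≤ 2 * (k:ℝ) := by linarith
    have h := Real.rpow_le_rpow_of_nonpos (by linarith : (0:ℝ) < (k:ℝ)+1) h2K
      (by linarith : -p ≤ 0)
    have hmul : ((2:ℝ) * (k:ℝ)) ^ (-p) = 2 ^ (-p) * (k:ℝ) ^ (-p) :=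
      Real.mul_rpow (by norm_num) (by positivity)
    have h2 : (2:ℝ) ^ p * (2:ℝ) ^ (-p) = 1 := by
      rw [← Real.rpow_add two_pos]
      norm_num
    calc (k:ℝ) ^ (-p) = (2:ℝ) ^ p * ((2:ℝ) ^ (-p) * (k:ℝ) ^ (-p)) := by
          rw [← mul_assoc, h2, one_mul]
      _ ≤ 2 ^ p * ((k:ℝ)+1) ^ (-p) := by
          rw [← hmul]
          exact mul_le_mul_of_nonneg_left h (by positivity)
  have hexp : Real.exp (∑ s ∈ Finset.Icc 2 k, g p (s:ℝ))
      ≤ Real.exp (g p 2) * Real.exp (∫ τ in (2:ℝ)..((k:ℝ)+1), g p τ) := by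
    rw [← Real.exp_add]
    exact Real.exp_le_exp.mpr (sum_le_int hp hk)
  rw [prod_eq_exp hp]
  calc (k:ℝ) ^ (-p) * Real.exp (∑ s ∈ Finset.Icc 2 k, g p (s:ℝ))
      ≤ (2 ^ p * ((k:ℝ)+1) ^ (-p)) *
        (Real.exp (g p 2) * Real.exp (∫ τ in (2:ℝ)..((k:ℝ)+1), g p τ)) :=
        mul_le_mul hKp hexp (Real.exp_pos _).le (by positivity)
    _ = (2 ^ p * Real.exp (g p 2)) *
        (((k:ℝ)+1) ^ (-p) * Real.exp (∫ τ in (2:ℝ)..((k:ℝ)+1), g p τ)) := by ring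
    _ ≤ (2:ℝ) ^ p * Real.exp (g p 2) * ∫ s in (k:ℝ)..((k:ℝ)+1), F p s :=
        mul_le_mul_of_nonneg_left hlow (by positivity)

end Stmt7Aux

theorem stmt_7 (p : ℝ) (hp0 : 1 / 2 < p) (hp1 : p ≤ 1)
    (β : ℕ → ℝ)
    (hβ : ∀ k : ℕ, β k = (k : ℝ) ^ (-p) * ∏ s ∈ Finset.Icc 2 k, (1 - (s : ℝ) ^ (-p))⁻¹)
    (Λ : ℕ → ℝ) (hΛ : ∀ n : ℕ, Λ n = ∑ k ∈ Finset.Icc 1 n, β k)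
    (Λt : ℝ → ℝ)
    (hΛt : ∀ y : ℝ, Λt y =
      ∫ s in (2 : ℝ)..(y + 1),
        s ^ (-p) * Real.exp (∫ τ in (2 : ℝ)..(s + 1), Real.log (τ ^ p / (τ ^ p - 1)))) :
    MonotoneOn Λt (Set.Ioi (0 : ℝ)) ∧
      ∃ c_a : ℝ, ∃ c_m > (0 : ℝ), ∀ n : ℕ, 1 ≤ n → Λ n ≤ c_m * (c_a + Λt n) := by
  have hp : 0 < p := by linarith
  have hF : ∀ y : ℝ, Λt y = ∫ s in (2:ℝ)..(y + 1), Stmt7Aux.F p s := fun y => hΛt y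
  constructor
  · intro a ha b hb hab
    have ha0 : (0:ℝ) < a := ha
    have hb0 : (0:ℝ) < b := hb
    rw [hF a, hF b]
    have ha1 : (1:ℝ) < a + 1 := by linarith
    have hb1 : (1:ℝ) < b + 1 := by linarith
    have hadd := intervalIntegral.integral_add_adjacent_intervals
      (Stmt7Aux.F_intInt hp one_lt_two ha1) (Stmt7Aux.F_intInt hp ha1 hb1)
    have hnn : 0 ≤ ∫ s in (a+1)..(b+1), Stmt7Aux.F p s :=
      intervalIntegral.integral_nonneg (by linarith)
        (fun x hx => Stmt7Aux.F_nonneg (by linarith [hx.1]))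
    linarith
  · set c : ℝ := (2:ℝ) ^ p * Real.exp (Stmt7Aux.g p 2) with hc
    have hc0 : 0 < c := by positivity
    refine ⟨c⁻¹, c, hc0, ?_⟩
    have key : ∀ n : ℕ, 1 ≤ n →
        Λ n ≤ 1 + c * ∫ s in (2:ℝ)..((n:ℝ)+1), Stmt7Aux.F p s := by
      intro n
      induction n with
      | zero => intro h; omega
      | succ m ih =>
        intro _
        rcases Nat.lt_or_ge m 1 with hm | hm
        · have hm0 : m = 0 := by omega
          subst hm0
          have h1 : Λ 1 = 1 := by
            rw [hΛ]
            rw [show Finset.Icc 1 1 = {1} from Finset.Icc_self 1, Finset.sum_singleton, hβ]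
            rw [show Finset.Icc 2 1 = ∅ from Finset.Icc_eq_empty (by omega)]
            simp [Real.one_rpow]
          rw [h1]
          norm_num
        · have ihm := ih hm
          have hm1 : (1:ℝ) ≤ (m:ℝ) := by exact_mod_cast hm
          have hβb := Stmt7Aux.beta_bound hp (k := m + 1) (by omega)
          have hΛs : Λ (m+1) = Λ m + β (m+1) := by
            rw [hΛ, hΛ, Finset.sum_Icc_succ_top (by omega)]
          have hsplit := intervalIntegral.integral_add_adjacent_intervals
            (Stmt7Aux.F_intInt hp one_lt_two (by linarith : (1:ℝ) < (m:ℝ)+1))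
            (Stmt7Aux.F_intInt hp (by linarith : (1:ℝ) < (m:ℝ)+1)
              (by linarith : (1:ℝ) < (m:ℝ)+1+1))
          have hβv := hβ (m+1)
          push_cast at hβb hβv hsplit ⊢
          rw [hΛs, hβv]
          rw [← hc] at hβb
          have hdist : c * ∫ (x : ℝ) in (2:ℝ)..(m:ℝ) + 1 + 1, Stmt7Aux.F p x =
              (c * ∫ (x : ℝ) in (2:ℝ)..(m:ℝ) + 1, Stmt7Aux.F p x) +
              c * ∫ (x : ℝ) in ((m:ℝ) + 1)..((m:ℝ) + 1 + 1), Stmt7Aux.F p x := by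
            rw [← hsplit]; ring
          linarith
    intro n hn
    have h := key n hn
    rw [hF n]
    rw [mul_add, mul_inv_cancel₀ (ne_of_gt hc0)]
    linarith
end

section
/- Let p ∈ (1/2, 1] and define g(y) = exp( ∫_2^{y+1} log( τ^p / (τ^p − 1) ) dτ ) and Λ̃(y) = ∫_2^{y+1} s^{−p} g(s) ds for y > 0 (y > 1 so the integrals are over nondegenerate intervals). Then lim_{y→∞} g(y)/Λ̃(y) = 1. -/
/-!
Write φ(τ) = log (τ^p / (τ^p - 1)) = -log (1 - τ^(-p)) and G(x) = exp ∫_2^x φ, so that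
g(y) = G(y + 1) and G' = φ G. Since φ(s) ~ s^(-p) and φ → 0 (hence G(s + 1) ~ G(s)), the
integrand s^(-p) G(s + 1) of Λ̃ is asymptotic to G'(s). For p ≤ 1 the bound φ(τ) ≥ 1/τ makes
G → ∞, and integrating an asymptotic equivalence against a divergent nonnegative integral
preserves it, so Λ̃(y) ~ G(y + 1) - G(2) ~ g(y).
-/

open Filter MeasureTheory Topology Set Asymptotics

theorem HasDerivAt.isEquivalent_sub_nhds {𝕜 F : Type*} [NontriviallyNormedField 𝕜]
    [NormedAddCommGroup F] [NormedSpace 𝕜 F] {f : 𝕜 → F} {f' : F} {x : 𝕜}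
    (hf : HasDerivAt f f' x) (hf' : f' ≠ 0) :
    (fun y => f y - f x) ~[𝓝 x] fun y => (y - x) • f' :=
  (HasDerivAtFilter.isEquivalent_sub hf hf').comp_tendsto
    (tendsto_id.prodMk tendsto_const_pure)

namespace Asymptotics

theorem IsLittleO.intervalIntegral_atTop {d h : ℝ → ℝ} {a : ℝ}
    (hd : ∀ x, a ≤ x → IntervalIntegrable d volume a x)
    (hh : ∀ x, a ≤ x → IntervalIntegrable h volume a x)
    (h_nonneg : ∀ x, a ≤ x → 0 ≤ h x)
    (h_top : Tendsto (fun x => ∫ t in a..x, h t) atTop atTop)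
    (hdh : d =o[atTop] h) :
    (fun x => ∫ t in a..x, d t) =o[atTop] (fun x => ∫ t in a..x, h t) := by
  refine isLittleO_iff.2 fun c hc => ?_
  obtain ⟨X, hX⟩ := eventually_atTop.1
    ((isLittleO_iff.1 hdh (half_pos hc)).and (eventually_ge_atTop a))
  have hXa : a ≤ max X a := le_max_right _ _
  filter_upwards [eventually_ge_atTop (max X a),
    h_top.eventually_ge_atTop (‖∫ t in a..max X a, d t‖ / (c / 2))] with x hx hx_big
  set Y := max X a
  have hax : a ≤ x := hXa.trans hx
  have hYx : uIcc Y x ⊆ uIcc a x := uIcc_subset_uIcc_right (by simp [uIcc_of_le hax, hXa, hx])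
  have h_tail : ‖∫ t in Y..x, d t‖ ≤ c / 2 * ∫ t in a..x, h t := by
    calc ‖∫ t in Y..x, d t‖ ≤ ∫ t in Y..x, c / 2 * h t := by
          refine intervalIntegral.norm_integral_le_of_norm_le hx
            (ae_of_all _ fun t ht => ?_) ((hh x hax).mono_set hYx |>.const_mul _)
          have := (hX t (le_max_left X a |>.trans ht.1.le)).1
          rwa [Real.norm_of_nonneg (h_nonneg t (hXa.trans ht.1.le))] at this
      _ = c / 2 * ∫ t in Y..x, h t := intervalIntegral.integral_const_mul _ _
      _ ≤ c / 2 * ∫ t in a..x, h t := by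
          gcongr
          rw [← intervalIntegral.integral_add_adjacent_intervals (hh Y hXa)
            ((hh x hax).mono_set hYx), le_add_iff_nonneg_left]
          exact intervalIntegral.integral_nonneg hXa fun t ht => h_nonneg t ht.1
  have h_head : ‖∫ t in a..Y, d t‖ ≤ c / 2 * ∫ t in a..x, h t := by
    rwa [div_le_iff₀' (half_pos hc)] at hx_big
  have h_pos : 0 ≤ ∫ t in a..x, h t :=
    intervalIntegral.integral_nonneg hax fun t ht => h_nonneg t ht.1
  rw [Real.norm_of_nonneg h_pos, ← intervalIntegral.integral_add_adjacent_intervals (hd Y hXa)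
    ((hd x hax).mono_set hYx)]
  linarith [norm_add_le (∫ t in a..Y, d t) (∫ t in Y..x, d t)]

theorem IsEquivalent.intervalIntegral_atTop {f h : ℝ → ℝ} {a : ℝ}
    (hf : ∀ x, a ≤ x → IntervalIntegrable f volume a x)
    (hh : ∀ x, a ≤ x → IntervalIntegrable h volume a x)
    (h_nonneg : ∀ x, a ≤ x → 0 ≤ h x)
    (h_top : Tendsto (fun x => ∫ t in a..x, h t) atTop atTop)
    (hfh : f ~[atTop] h) :
    (fun x => ∫ t in a..x, f t) ~[atTop] (fun x => ∫ t in a..x, h t) := by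
  refine (IsLittleO.intervalIntegral_atTop (fun x hx => (hf x hx).sub (hh x hx)) hh h_nonneg
    h_top hfh).congr' ?_ EventuallyEq.rfl
  filter_upwards [eventually_ge_atTop a] with x hx
  exact intervalIntegral.integral_sub (hf x hx) (hh x hx)

end Asymptotics

theorem Filter.Tendsto.intervalIntegral_add_atTop {f : ℝ → ℝ} (hf : Tendsto f atTop (𝓝 0))
    (c : ℝ) : Tendsto (fun s => ∫ t in s..s + c, f t) atTop (𝓝 0) := by
  refine Metric.tendsto_nhds.2 fun ε hε => ?_
  obtain ⟨X, hX⟩ := eventually_atTop.1 (Metric.tendsto_nhds.1 hf (ε / (|c| + 1)) (by positivity))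
  filter_upwards [eventually_ge_atTop (X + |c|)] with s hs
  have h_bound : ∀ t ∈ uIoc s (s + c), ‖f t‖ ≤ ε / (|c| + 1) := fun t ht => by
    have : X ≤ t := by
      have := ht.1
      rw [min_def] at this
      split_ifs at this <;> linarith [neg_abs_le c, abs_nonneg c]
    simpa using (hX t this).le
  calc dist (∫ t in s..s + c, f t) 0 = ‖∫ t in s..s + c, f t‖ := dist_zero_right _
    _ ≤ ε / (|c| + 1) * |s + c - s| := intervalIntegral.norm_integral_le_of_norm_le_const h_bound
    _ < ε := by
      rw [add_sub_cancel_left, div_mul_eq_mul_div, div_lt_iff₀ (by positivity)]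
      nlinarith [abs_nonneg c]

namespace ExpIntegralWeight

noncomputable def phi (p τ : ℝ) : ℝ := Real.log (τ ^ p / (τ ^ p - 1))

noncomputable def G (p x : ℝ) : ℝ := Real.exp (∫ τ in (2 : ℝ)..x, phi p τ)

variable {p : ℝ}

theorem phi_eq_neg_log_one_sub {τ : ℝ} (hτ : 0 < τ) :
    phi p τ = -Real.log (1 - τ ^ (-p)) := by
  have h : 0 < τ ^ p := by positivity
  rw [phi, Real.rpow_neg hτ.le, ← Real.log_inv]
  congr 1
  field_simp

theorem continuousOn_phi (hp : 0 < p) : ContinuousOn (phi p) (Ioi 1) := by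
  refine ContinuousOn.congr (f := fun τ => -Real.log (1 - τ ^ (-p))) ?_
    fun τ hτ => phi_eq_neg_log_one_sub (zero_lt_one.trans hτ)
  refine ((continuousOn_const.sub (continuousOn_id.rpow_const fun τ hτ => ?_)).log
    fun τ hτ => ?_).neg
  · exact Or.inl (zero_lt_one.trans hτ).ne'
  · have : τ ^ (-p) < 1 := Real.rpow_lt_one_of_one_lt_of_neg hτ (by linarith)
    simp only [Pi.sub_apply, id]
    linarith

theorem inv_le_phi (hp : 0 < p) (hp1 : p ≤ 1) {τ : ℝ} (hτ : 1 < τ) : τ⁻¹ ≤ phi p τ := by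
  have h_lt : τ ^ (-p) < 1 := Real.rpow_lt_one_of_one_lt_of_neg hτ (by linarith)
  calc τ⁻¹ = τ ^ (-1 : ℝ) := (Real.rpow_neg_one τ).symm
    _ ≤ τ ^ (-p) := Real.rpow_le_rpow_of_exponent_le hτ.le (by linarith)
    _ ≤ -Real.log (1 - τ ^ (-p)) := by linarith [Real.log_le_sub_one_of_pos (sub_pos.2 h_lt)]
    _ = phi p τ := (phi_eq_neg_log_one_sub (zero_lt_one.trans hτ)).symm

theorem phi_nonneg (hp : 0 ≤ p) {τ : ℝ} (hτ : 1 < τ) : 0 ≤ phi p τ := by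
  rw [phi_eq_neg_log_one_sub (zero_lt_one.trans hτ), neg_nonneg]
  exact Real.log_nonpos (sub_nonneg.2 (Real.rpow_le_one_of_one_le_of_nonpos hτ.le (by linarith)))
    (by linarith [Real.rpow_pos_of_pos (zero_lt_one.trans hτ) (-p)])

theorem intervalIntegrable_phi (hp : 0 < p) {a b : ℝ} (ha : 1 < a) (hb : 1 < b) :
    IntervalIntegrable (phi p) volume a b :=
  (continuousOn_phi hp).mono (fun _ hx => (lt_min ha hb).trans_le hx.1) |>.intervalIntegrable

theorem hasDerivAt_G (hp : 0 < p) {x : ℝ} (hx : 1 < x) :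
    HasDerivAt (G p) (phi p x * G p x) x :=
  (intervalIntegral.integral_hasDerivAt_right (intervalIntegrable_phi hp one_lt_two hx)
    ((continuousOn_phi hp).stronglyMeasurableAtFilter isOpen_Ioi x hx)
    ((continuousOn_phi hp).continuousAt (Ioi_mem_nhds hx))).exp.congr_deriv (mul_comm _ _)

theorem continuousOn_G (hp : 0 < p) : ContinuousOn (G p) (Ioi 1) :=
  fun _ hx => (hasDerivAt_G hp hx).continuousAt.continuousWithinAt

theorem integral_phi_mul_G (hp : 0 < p) {x : ℝ} (hx : 2 ≤ x) :
    ∫ s in (2 : ℝ)..x, phi p s * G p s = G p x - G p 2 := by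
  have hsub : uIcc 2 x ⊆ Ioi 1 := fun s hs => by
    rw [uIcc_of_le hx] at hs; exact one_lt_two.trans_le hs.1
  exact intervalIntegral.integral_eq_sub_of_hasDerivAt (fun s hs => hasDerivAt_G hp (hsub hs))
    (((continuousOn_phi hp).mul (continuousOn_G hp)).mono hsub).intervalIntegrable

theorem tendsto_G_atTop (hp : 0 < p) (hp1 : p ≤ 1) : Tendsto (G p) atTop atTop := by
  refine Real.tendsto_exp_atTop.comp (tendsto_atTop_mono' atTop ?_
    (Real.tendsto_log_atTop.comp (tendsto_id.atTop_div_const two_pos)))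
  filter_upwards [eventually_ge_atTop 2] with x hx
  rw [Function.comp_apply, id, ← integral_inv_of_pos two_pos (by linarith)]
  refine intervalIntegral.integral_mono_on hx ?_
    (intervalIntegrable_phi hp one_lt_two (by linarith))
    fun τ hτ => inv_le_phi hp hp1 (by linarith [hτ.1])
  exact (continuousOn_inv₀.mono fun τ hτ => by
    rw [uIcc_of_le hx] at hτ; exact (by linarith [hτ.1] : (0:ℝ) < τ).ne').intervalIntegrable

theorem isEquivalent_phi_rpow (hp : 0 < p) : phi p ~[atTop] fun s => s ^ (-p) := by
  have h_deriv : HasDerivAt (fun u : ℝ => -Real.log (1 - u)) 1 0 := by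
    simpa using (((hasDerivAt_id (0 : ℝ)).const_sub 1).log (by norm_num)).fun_neg
  have h := (h_deriv.isEquivalent_sub_nhds one_ne_zero).comp_tendsto (tendsto_rpow_neg_atTop hp)
  simp only [Function.comp_def, sub_zero, Real.log_one, neg_zero, smul_eq_mul, mul_one] at h
  refine h.congr_left ?_
  filter_upwards [eventually_gt_atTop 0] with s hs
  exact (phi_eq_neg_log_one_sub hs).symm

theorem isEquivalent_G_add_one (hp : 0 < p) : (fun s => G p (s + 1)) ~[atTop] G p := by
  have h_phi := (isEquivalent_phi_rpow hp).symm.tendsto_nhds (tendsto_rpow_neg_atTop hp)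
  have h := (Real.continuous_exp.tendsto 0).comp (h_phi.intervalIntegral_add_atTop 1)
  rw [Real.exp_zero] at h
  refine isEquivalent_of_tendsto_one (h.congr' ?_)
  filter_upwards [eventually_ge_atTop 2] with s hs
  rw [Function.comp_apply, Pi.div_apply, G, G, ← Real.exp_sub,
    ← intervalIntegral.integral_add_adjacent_intervals
      (intervalIntegrable_phi hp one_lt_two (by linarith))
      (intervalIntegrable_phi hp (by linarith) (by linarith)), add_sub_cancel_left]

theorem isEquivalent_integral_rpow_mul_G (hp : 0 < p) (hp1 : p ≤ 1) :
    (fun x => ∫ s in (2 : ℝ)..x, s ^ (-p) * G p (s + 1)) ~[atTop] G p := by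
  have h_Ici : Ici (2 : ℝ) ⊆ Ioi 1 := fun s hs => mem_Ioi.2 (one_lt_two.trans_le hs)
  have h_sub : ∀ x : ℝ, 2 ≤ x → uIcc 2 x ⊆ Ici 2 := fun x hx => by
    rw [uIcc_of_le hx]; exact Icc_subset_Ici_self
  have h_cont_f : ContinuousOn (fun s => s ^ (-p) * G p (s + 1)) (Ici 2) :=
    (continuousOn_id.rpow_const fun s hs => Or.inl (zero_lt_two.trans_le hs).ne').mul
      ((continuousOn_G hp).comp (continuousOn_id.add continuousOn_const)
        fun s hs => show 1 < s + 1 by linarith [mem_Ici.1 hs])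
  have h_cont_h : ContinuousOn (fun s => phi p s * G p s) (Ici 2) :=
    ((continuousOn_phi hp).mul (continuousOn_G hp)).mono h_Ici
  have h_G_sub : (fun x => G p x - G p 2) ~[atTop] G p :=
    IsEquivalent.refl.sub_isLittleO (isLittleO_const_left.2
      (Or.inr (tendsto_norm_atTop_atTop.comp (tendsto_G_atTop hp hp1))))
  have h_ftc : (fun x => ∫ s in (2 : ℝ)..x, phi p s * G p s) =ᶠ[atTop] fun x => G p x - G p 2 :=
    (eventually_ge_atTop 2).mono fun x hx => integral_phi_mul_G hp hx
  refine (IsEquivalent.intervalIntegral_atTop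
    (fun x hx => (h_cont_f.mono (h_sub x hx)).intervalIntegrable)
    (fun x hx => (h_cont_h.mono (h_sub x hx)).intervalIntegrable)
    (fun x hx => mul_nonneg (phi_nonneg hp.le (by linarith)) (Real.exp_pos _).le)
    (tendsto_atTop_add_const_right _ _ (tendsto_G_atTop hp hp1) |>.congr' h_ftc.symm)
    ((isEquivalent_phi_rpow hp).symm.mul (isEquivalent_G_add_one hp))).trans
    (h_G_sub.congr_left h_ftc.symm)

end ExpIntegralWeight

theorem stmt_9 (p : ℝ) (hp0 : 1 / 2 < p) (hp1 : p ≤ 1)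
    (g : ℝ → ℝ)
    (hg : ∀ y : ℝ, g y = Real.exp (∫ τ in (2 : ℝ)..(y + 1), Real.log (τ ^ p / (τ ^ p - 1))))
    (Λt : ℝ → ℝ)
    (hΛt : ∀ y : ℝ, Λt y = ∫ s in (2 : ℝ)..(y + 1), s ^ (-p) * g s) :
    Tendsto (fun y => g y / Λt y) atTop (𝓝 1) := by
  have hp : 0 < p := by linarith
  have hg_eq : g = fun y => ExpIntegralWeight.G p (y + 1) := funext hg
  have h_equiv : Λt ~[atTop] g := by
    rw [hg_eq]
    refine ((ExpIntegralWeight.isEquivalent_integral_rpow_mul_G hp hp1).comp_tendsto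
      (tendsto_atTop_add_const_right atTop 1 tendsto_id)).congr_left
      (Eventually.of_forall fun y => ?_)
    rw [hΛt, hg_eq]
    rfl
  have h_g_ne : ∀ᶠ y in atTop, g y ≠ 0 := Eventually.of_forall fun y => by
    rw [hg]; exact (Real.exp_pos _).ne'
  simpa only [Pi.div_apply, inv_div, inv_one] using
    ((isEquivalent_iff_tendsto_one h_g_ne).1 h_equiv).inv₀ one_ne_zero
end

section
/- Let p ∈ (1/2, 1], let ε satisfy 0 < ε < (2p − 1)/(1 − p) if p < 1 (ε > 0 arbitrary if p = 1), and define Λ_n = Σ_{k=1}^n β_k with β_k = k^{−p} Π_{s=2}^{k} (1 − s^{−p})^{−1}. Then lim_{n→∞} log(Λ_n) / n^{p/(1+ε)} = 0. -/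
open Filter MeasureTheory Topology

/-!
Since `Λₙ ≥ β₁ = 1` and every `βₖ` with `k ≤ n` is at most `Pₙ = ∏_{s=2}^n (1 - s⁻ᵖ)⁻¹`, we get
`0 ≤ log Λₙ ≤ log n + log Pₙ`. As `-log (1 - x) ≤ x / (1 - x)` and `s⁻ᵖ ≤ 2⁻ᵖ < 1`,
`log Pₙ ≤ C ∑_{s ≤ n} s⁻ᵖ ≤ C n^(1-p) (1 + log n)`, using `s⁻ᵖ ≤ n^(1-p) / s` for `p ≤ 1`.
Hence `log Λₙ = O(n^(1-p) log n)`, which is `o(n^a)` for every `a > 1 - p`; the constraint on `ε`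
is exactly `1 - p < p / (1 + ε)`.
-/

open Finset Real

noncomputable def factorProd (p : ℝ) (n : ℕ) : ℝ :=
  ∏ s ∈ Icc 2 n, (1 - (s : ℝ) ^ (-p))⁻¹

noncomputable def beta (p : ℝ) (k : ℕ) : ℝ :=
  (k : ℝ) ^ (-p) * factorProd p k

noncomputable def betaSum (p : ℝ) (n : ℕ) : ℝ :=
  ∑ k ∈ Icc 1 n, beta p k

lemma rpow_neg_le_two_rpow_neg {p : ℝ} (hp : 0 ≤ p) {s : ℕ} (hs : 2 ≤ s) :
    (s : ℝ) ^ (-p) ≤ 2 ^ (-p) :=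
  rpow_le_rpow_of_nonpos two_pos (by exact_mod_cast hs) (neg_nonpos.mpr hp)

lemma two_rpow_neg_lt_one {p : ℝ} (hp : 0 < p) : (2 : ℝ) ^ (-p) < 1 :=
  rpow_lt_one_of_one_lt_of_neg one_lt_two (neg_neg_iff_pos.mpr hp)

lemma one_sub_rpow_neg_pos {p : ℝ} (hp : 0 < p) {s : ℕ} (hs : 2 ≤ s) :
    0 < 1 - (s : ℝ) ^ (-p) := by
  linarith [rpow_neg_le_two_rpow_neg hp.le hs, two_rpow_neg_lt_one hp]

lemma one_le_inv_one_sub_rpow_neg {p : ℝ} (hp : 0 < p) {s : ℕ} (hs : 2 ≤ s) :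
    1 ≤ (1 - (s : ℝ) ^ (-p))⁻¹ :=
  one_le_inv₀ (one_sub_rpow_neg_pos hp hs) |>.mpr
    (sub_le_self _ (rpow_nonneg (Nat.cast_nonneg s) _))

lemma log_inv_one_sub_rpow_neg_le {p : ℝ} (hp : 0 < p) {s : ℕ} (hs : 2 ≤ s) :
    log (1 - (s : ℝ) ^ (-p))⁻¹ ≤ (1 - 2 ^ (-p))⁻¹ * (s : ℝ) ^ (-p) := by
  have hx := one_sub_rpow_neg_pos hp hs
  calc log (1 - (s : ℝ) ^ (-p))⁻¹ ≤ (1 - (s : ℝ) ^ (-p))⁻¹ - 1 :=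
        log_le_sub_one_of_pos (inv_pos.mpr hx)
    _ = (1 - (s : ℝ) ^ (-p))⁻¹ * (s : ℝ) ^ (-p) := by field_simp; ring
    _ ≤ (1 - 2 ^ (-p))⁻¹ * (s : ℝ) ^ (-p) := by
        refine mul_le_mul_of_nonneg_right (inv_anti₀ ?_ ?_) (by positivity)
        · exact sub_pos.mpr (two_rpow_neg_lt_one hp)
        · linarith [rpow_neg_le_two_rpow_neg hp.le hs]

lemma rpow_neg_le_rpow_one_sub_mul_inv {p x y : ℝ} (hp : p ≤ 1) (hx : 0 < x) (hxy : x ≤ y) :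
    x ^ (-p) ≤ y ^ (1 - p) * x⁻¹ := by
  calc x ^ (-p) = x ^ (1 - p) * x⁻¹ := by
        rw [← rpow_neg_one, ← rpow_add hx]; ring_nf
    _ ≤ y ^ (1 - p) * x⁻¹ := by gcongr

lemma sum_Icc_rpow_neg_le {p : ℝ} (hp : p ≤ 1) (n : ℕ) :
    ∑ s ∈ Icc 1 n, (s : ℝ) ^ (-p) ≤ (n : ℝ) ^ (1 - p) * (1 + log n) := by
  calc ∑ s ∈ Icc 1 n, (s : ℝ) ^ (-p) ≤ ∑ s ∈ Icc 1 n, (n : ℝ) ^ (1 - p) * (s : ℝ)⁻¹ := by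
        refine sum_le_sum fun s hs => ?_
        obtain ⟨_, hsn⟩ := mem_Icc.mp hs
        exact rpow_neg_le_rpow_one_sub_mul_inv hp (by positivity) (by exact_mod_cast hsn)
    _ = (n : ℝ) ^ (1 - p) * harmonic n := by
        rw [← mul_sum, harmonic_eq_sum_Icc]; push_cast; rfl
    _ ≤ (n : ℝ) ^ (1 - p) * (1 + log n) := by
        gcongr; exact harmonic_le_one_add_log n

lemma log_factorProd_le {p : ℝ} (hp0 : 0 < p) (hp1 : p ≤ 1) (n : ℕ) :
    log (factorProd p n) ≤ (1 - 2 ^ (-p))⁻¹ * ((n : ℝ) ^ (1 - p) * (1 + log n)) := by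
  have hc : 0 ≤ (1 - (2 : ℝ) ^ (-p))⁻¹ := inv_nonneg.mpr (sub_pos.mpr (two_rpow_neg_lt_one hp0)).le
  rw [factorProd, log_prod fun s hs => (inv_pos.mpr (one_sub_rpow_neg_pos hp0 (mem_Icc.mp hs).1)).ne']
  calc ∑ s ∈ Icc 2 n, log (1 - (s : ℝ) ^ (-p))⁻¹
      ≤ ∑ s ∈ Icc 2 n, (1 - 2 ^ (-p))⁻¹ * (s : ℝ) ^ (-p) :=
        sum_le_sum fun s hs => log_inv_one_sub_rpow_neg_le hp0 (mem_Icc.mp hs).1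
    _ ≤ (1 - 2 ^ (-p))⁻¹ * ∑ s ∈ Icc 1 n, (s : ℝ) ^ (-p) := by
        rw [← mul_sum]
        exact mul_le_mul_of_nonneg_left (sum_le_sum_of_subset_of_nonneg
          (Icc_subset_Icc one_le_two le_rfl) fun _ _ _ => by positivity) hc
    _ ≤ _ := by gcongr; exact sum_Icc_rpow_neg_le hp1 n

lemma factorProd_pos {p : ℝ} (hp : 0 < p) (n : ℕ) : 0 < factorProd p n :=
  prod_pos fun _ hs => inv_pos.mpr (one_sub_rpow_neg_pos hp (mem_Icc.mp hs).1)

lemma factorProd_mono {p : ℝ} (hp : 0 < p) : Monotone (factorProd p) := fun _ _ hmn =>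
  prod_le_prod_of_subset_of_one_le (Icc_subset_Icc le_rfl hmn)
    (fun _ hs => (inv_pos.mpr (one_sub_rpow_neg_pos hp (mem_Icc.mp hs).1)).le)
    fun _ hs _ => one_le_inv_one_sub_rpow_neg hp (mem_Icc.mp hs).1

lemma beta_pos {p : ℝ} (hp : 0 < p) {k : ℕ} (hk : 1 ≤ k) : 0 < beta p k :=
  mul_pos (rpow_pos_of_pos (by exact_mod_cast hk) _) (factorProd_pos hp k)

lemma beta_le_factorProd {p : ℝ} (hp : 0 < p) {k n : ℕ} (hk : 1 ≤ k) (hkn : k ≤ n) :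
    beta p k ≤ factorProd p n :=
  calc beta p k ≤ 1 * factorProd p k :=
        mul_le_mul_of_nonneg_right
          (rpow_le_one_of_one_le_of_nonpos (by exact_mod_cast hk) (by linarith))
          (factorProd_pos hp k).le
    _ ≤ factorProd p n := by rw [one_mul]; exact factorProd_mono hp hkn

lemma one_le_betaSum {p : ℝ} (hp : 0 < p) {n : ℕ} (hn : 1 ≤ n) : 1 ≤ betaSum p n :=
  calc (1 : ℝ) = beta p 1 := by simp [beta, factorProd]
    _ ≤ betaSum p n := single_le_sum (fun k hk => (beta_pos hp (mem_Icc.mp hk).1).le)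
        (mem_Icc.mpr ⟨le_rfl, hn⟩)

lemma betaSum_le {p : ℝ} (hp : 0 < p) (n : ℕ) : betaSum p n ≤ n * factorProd p n :=
  calc betaSum p n ≤ ∑ _k ∈ Icc 1 n, factorProd p n :=
        sum_le_sum fun k hk => beta_le_factorProd hp (mem_Icc.mp hk).1 (mem_Icc.mp hk).2
    _ = n * factorProd p n := by simp

lemma log_betaSum_le {p : ℝ} (hp0 : 0 < p) (hp1 : p ≤ 1) {n : ℕ} (hn : 1 ≤ n) :
    log (betaSum p n) ≤ (1 + (1 - 2 ^ (-p))⁻¹) * ((n : ℝ) ^ (1 - p) * (1 + log n)) := by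
  have hn' : (1 : ℝ) ≤ n := by exact_mod_cast hn
  have hlog_n : log n ≤ (n : ℝ) ^ (1 - p) * (1 + log n) := by
    have := one_le_rpow hn' (sub_nonneg.mpr hp1)
    nlinarith [log_nonneg hn']
  calc log (betaSum p n) ≤ log (n * factorProd p n) :=
        log_le_log (by linarith [one_le_betaSum hp0 hn]) (betaSum_le hp0 n)
    _ = log n + log (factorProd p n) := log_mul (by positivity) (factorProd_pos hp0 n).ne'
    _ ≤ _ := by linarith [log_factorProd_le hp0 hp1 n]

lemma tendsto_one_add_log_div_rpow_atTop {δ : ℝ} (hδ : 0 < δ) :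
    Tendsto (fun x : ℝ => (1 + log x) / x ^ δ) atTop (𝓝 0) := by
  have h := (tendsto_rpow_neg_atTop hδ).add (isLittleO_log_rpow_atTop hδ).tendsto_div_nhds_zero
  rw [add_zero] at h
  refine h.congr' ?_
  filter_upwards [eventually_gt_atTop 0] with x hx
  rw [rpow_neg hx.le, add_div, one_div]

lemma tendsto_log_betaSum_div_rpow {p a : ℝ} (hp0 : 0 < p) (hp1 : p ≤ 1) (ha : 1 - p < a) :
    Tendsto (fun n : ℕ => log (betaSum p n) / (n : ℝ) ^ a) atTop (𝓝 0) := by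
  set C := 1 + (1 - (2 : ℝ) ^ (-p))⁻¹
  have hbound := ((tendsto_one_add_log_div_rpow_atTop (sub_pos.mpr ha)).comp
    tendsto_natCast_atTop_atTop).const_mul C
  rw [mul_zero] at hbound
  refine squeeze_zero' ?_ ?_ hbound
  · filter_upwards [eventually_ge_atTop 1] with n hn
    exact div_nonneg (log_nonneg (one_le_betaSum hp0 hn)) (by positivity)
  · filter_upwards [eventually_ge_atTop 1] with n hn
    have hn0 : (0 : ℝ) < n := by exact_mod_cast hn
    have hsplit : (n : ℝ) ^ a = (n : ℝ) ^ (1 - p) * (n : ℝ) ^ (a - (1 - p)) := by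
      rw [← rpow_add hn0, add_sub_cancel]
    calc log (betaSum p n) / (n : ℝ) ^ a
        ≤ C * ((n : ℝ) ^ (1 - p) * (1 + log n)) / (n : ℝ) ^ a := by
          gcongr; exact log_betaSum_le hp0 hp1 hn
      _ = C * ((1 + log n) / (n : ℝ) ^ (a - (1 - p))) := by
          rw [hsplit]; field_simp

lemma one_sub_lt_div_one_add {p ε : ℝ} (hp0 : 1 / 2 < p) (hp1 : p ≤ 1) (hε0 : 0 < ε)
    (hε1 : p < 1 → ε < (2 * p - 1) / (1 - p)) : 1 - p < p / (1 + ε) := by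
  rw [lt_div_iff₀ (by linarith)]
  rcases hp1.lt_or_eq with hp1 | rfl
  · have := (lt_div_iff₀ (sub_pos.mpr hp1)).mp (hε1 hp1)
    nlinarith
  · linarith

theorem stmt_12 (p : ℝ) (hp0 : 1 / 2 < p) (hp1 : p ≤ 1)
    (ε : ℝ) (hε0 : 0 < ε) (hε1 : p < 1 → ε < (2 * p - 1) / (1 - p))
    (β : ℕ → ℝ)
    (hβ : ∀ k : ℕ, β k = (k : ℝ) ^ (-p) * ∏ s ∈ Finset.Icc 2 k, (1 - (s : ℝ) ^ (-p))⁻¹)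
    (Λ : ℕ → ℝ) (hΛ : ∀ n : ℕ, Λ n = ∑ k ∈ Finset.Icc 1 n, β k) :
    Tendsto (fun n : ℕ => Real.log (Λ n) / (n : ℝ) ^ (p / (1 + ε))) atTop (𝓝 0) := by
  obtain rfl : β = beta p := funext hβ
  obtain rfl : Λ = betaSum p := funext hΛ
  exact tendsto_log_betaSum_div_rpow (by linarith) hp1 (one_sub_lt_div_one_add hp0 hp1 hε0 hε1)
end

section
/- Let (Γ, 𝒢, π) be a probability space, θ : Γ → Γ a measure-preserving map, and g ∈ L²(Γ, π) bounded from below. Define ρ(m) = ∫_Γ g(ω) g(θ^m ω) dπ(ω) − ( ∫_Γ g dπ )² for m ∈ ℕ₀ and assume Σ_{m=0}^∞ |ρ(m)| < ∞ (summable decay of correlations). Let p ∈ (1/2, 1] and let (τ̂_n)_{n≥1} be the p-EMA of the observations τ̃_n = g(θ^{n−1} ω₀), i.e. τ̂_1 = τ̃_1 and τ̂_{n+1} = (1 − (n+1)^{−p}) τ̂_n + (n+1)^{−p} τ̃_{n+1}. Then for π-almost every ω₀ ∈ Γ, τ̂_n → ∫_Γ g dπ as n → ∞. -/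
/-!
Write `a n = (n + 1) ^ (-p)` and unroll the recursion: `τ̂_{n+1} = ∑_{k ≤ n} W n k · g (θ^k ω₀)`
with nonnegative weights summing to `1`, each at most `a n` (this is where `p ≤ 1` enters).
Measure preservation makes the covariances of the observations depend only on the lag, so
summability of `ρ` bounds `‖τ̂_{n+1} - ∫ g‖₂²` by `2 (∑ |ρ|) a n`. Along `n = k²` these bounds are
summable (`2p > 1`), hence `τ̂` converges almost surely along the squares. Between consecutive
squares the recursion moves the average by at most `O(∑_{k² < j ≤ (k+1)²} a j) = O(k^{1-2p})`,
provided the observations are bounded from below, and this fills in the gaps.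
-/

open Filter MeasureTheory Topology

open Finset ProbabilityTheory

lemma one_sub_sum_le_prod_one_sub {ι : Type*} [LinearOrder ι] {s : Finset ι} {f : ι → ℝ}
    (h0 : ∀ i ∈ s, 0 ≤ f i) (h1 : ∀ i ∈ s, f i ≤ 1) :
    1 - ∑ i ∈ s, f i ≤ ∏ i ∈ s, (1 - f i) := by
  rw [prod_one_sub_ordered]
  gcongr with i hi
  refine mul_le_of_le_one_right (h0 i hi) (prod_le_one (fun j hj => ?_) fun j hj => ?_)
  · exact sub_nonneg.2 (h1 j (mem_filter.1 hj).1)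
  · exact sub_le_self _ (h0 j (mem_filter.1 hj).1)

-- Indexed from `0`: for `a n = (n + 1) ^ (-p)` and `y k = g (θ^k ω₀)`, `ema a y n` is `τ̂_{n+1}`.
def ema (a y : ℕ → ℝ) : ℕ → ℝ
  | 0 => y 0
  | n + 1 => (1 - a (n + 1)) * ema a y n + a (n + 1) * y (n + 1)

section Ema

variable {a y : ℕ → ℝ} {M : ℝ}

lemma ema_const (a : ℕ → ℝ) (c : ℝ) (n : ℕ) : ema a (fun _ => c) n = c := by
  induction n with
  | zero => rfl
  | succ n ih => rw [ema, ih]; ring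

lemma ema_sub_const (a y : ℕ → ℝ) (c : ℝ) (n : ℕ) :
    ema a (fun k => y k - c) n = ema a y n - c := by
  induction n with
  | zero => rfl
  | succ n ih => rw [ema, ema, ih]; ring

lemma ema_add_mul_prod_le (ha0 : ∀ n, 0 ≤ a n) (ha1 : ∀ n, a n ≤ 1) (hy : ∀ n, -M ≤ y n)
    {m n : ℕ} (hmn : m ≤ n) :
    (ema a y m + M) * ∏ j ∈ Ioc m n, (1 - a j) ≤ ema a y n + M := by
  induction n, hmn using Nat.le_induction with
  | base => simp
  | succ n hmn ih =>
    have hyM : 0 ≤ a (n + 1) * (y (n + 1) + M) := mul_nonneg (ha0 _) (by linarith [hy (n + 1)])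
    calc (ema a y m + M) * ∏ j ∈ Ioc m (n + 1), (1 - a j)
        = (ema a y m + M) * (∏ j ∈ Ioc m n, (1 - a j)) * (1 - a (n + 1)) := by
          rw [prod_Ioc_succ_top hmn, mul_assoc]
      _ ≤ (ema a y n + M) * (1 - a (n + 1)) :=
          mul_le_mul_of_nonneg_right ih (sub_nonneg.2 (ha1 _))
      _ ≤ ema a y (n + 1) + M := by rw [ema]; linarith

lemma one_sub_le_prod_of_sum_le (ha0 : ∀ n, 0 ≤ a n) (ha1 : ∀ n, a n ≤ 1) {m n : ℕ} {δ : ℝ}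
    (hδ : ∑ j ∈ Ioc m n, a j ≤ δ) : 1 - δ ≤ ∏ j ∈ Ioc m n, (1 - a j) :=
  (sub_le_sub_left hδ 1).trans
    (one_sub_sum_le_prod_one_sub (fun j _ => ha0 j) fun j _ => ha1 j)

lemma neg_le_ema_of_sum_le (ha0 : ∀ n, 0 ≤ a n) (ha1 : ∀ n, a n ≤ 1) (hy : ∀ n, -M ≤ y n)
    (hM : 0 ≤ M) {m n : ℕ} (hmn : m ≤ n) {δ : ℝ} (hδ : ∑ j ∈ Ioc m n, a j ≤ δ) :
    -(|ema a y m| + M * δ) ≤ ema a y n := by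
  set P := ∏ j ∈ Ioc m n, (1 - a j)
  have hP0 : 0 ≤ P := prod_nonneg fun j _ => sub_nonneg.2 (ha1 j)
  have hP1 : P ≤ 1 := prod_le_one (fun j _ => sub_nonneg.2 (ha1 j)) fun j _ => sub_le_self _ (ha0 j)
  have hPδ : M * (1 - P) ≤ M * δ :=
    mul_le_mul_of_nonneg_left (by linarith [one_sub_le_prod_of_sum_le ha0 ha1 hδ]) hM
  have h1 := mul_nonneg (neg_abs_le (ema a y m) |> neg_le_iff_add_nonneg.1) hP0
  have h2 := mul_nonneg (abs_nonneg (ema a y m)) (sub_nonneg.2 hP1)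
  linarith [ema_add_mul_prod_le ha0 ha1 hy hmn]

lemma ema_le_of_sum_le (ha0 : ∀ n, 0 ≤ a n) (ha1 : ∀ n, a n ≤ 1) (hy : ∀ n, -M ≤ y n)
    (hM : 0 ≤ M) {m n : ℕ} (hmn : m ≤ n) {δ : ℝ} (hδ : ∑ j ∈ Ioc m n, a j ≤ δ) (hδ1 : δ < 1) :
    ema a y m ≤ (|ema a y n| + M) / (1 - δ) - M := by
  rw [le_sub_iff_add_le, le_div_iff₀ (sub_pos.2 hδ1)]
  rcases le_total 0 (ema a y m + M) with h | h
  · calc (ema a y m + M) * (1 - δ)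
        ≤ (ema a y m + M) * ∏ j ∈ Ioc m n, (1 - a j) :=
          mul_le_mul_of_nonneg_left (one_sub_le_prod_of_sum_le ha0 ha1 hδ) h
      _ ≤ ema a y n + M := ema_add_mul_prod_le ha0 ha1 hy hmn
      _ ≤ |ema a y n| + M := by linarith [le_abs_self (ema a y n)]
  · nlinarith [abs_nonneg (ema a y n)]

theorem tendsto_ema_zero_of_tendsto_sq (ha0 : ∀ n, 0 ≤ a n) (ha1 : ∀ n, a n ≤ 1)
    (hy : BddBelow (Set.range y)) (hsq : Tendsto (fun k => ema a y (k ^ 2)) atTop (𝓝 0))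
    (hδ : Tendsto (fun k => ∑ j ∈ Ioc (k ^ 2) ((k + 1) ^ 2), a j) atTop (𝓝 0)) :
    Tendsto (ema a y) atTop (𝓝 0) := by
  obtain ⟨M, hM, hyM⟩ : ∃ M, 0 ≤ M ∧ ∀ n, -M ≤ y n := by
    obtain ⟨b, hb⟩ := hy
    exact ⟨max (-b) 0, le_max_right _ _,
      fun n => by linarith [le_max_left (-b) 0, hb (Set.mem_range_self n)]⟩
  set δ := fun k => ∑ j ∈ Ioc (k ^ 2) ((k + 1) ^ 2), a j
  have hsqrt : Tendsto Nat.sqrt atTop atTop :=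
    tendsto_atTop_atTop.2 fun k => ⟨k ^ 2, fun n hn => Nat.le_sqrt'.2 hn⟩
  have hsub : ∀ {k m n : ℕ}, k ^ 2 ≤ m → n ≤ (k + 1) ^ 2 → ∑ j ∈ Ioc m n, a j ≤ δ k :=
    fun hm hn => sum_le_sum_of_subset_of_nonneg (Ioc_subset_Ioc hm hn) fun j _ _ => ha0 j
  have hlower : Tendsto (fun k => -(|ema a y (k ^ 2)| + M * δ k)) atTop (𝓝 0) := by
    simpa using (hsq.abs.add (hδ.const_mul M)).neg
  have hupper : Tendsto (fun k => (|ema a y ((k + 1) ^ 2)| + M) / (1 - δ k) - M) atTop (𝓝 0) := by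
    have hnext := (tendsto_add_atTop_iff_nat 1).2 hsq
    have hden : Tendsto (fun k => 1 - δ k) atTop (𝓝 1) := by simpa using tendsto_const_nhds.sub hδ
    simpa using ((hnext.abs.add_const M).div hden one_ne_zero).sub_const M
  refine tendsto_of_tendsto_of_tendsto_of_le_of_le' (hlower.comp hsqrt) (hupper.comp hsqrt)
    (Eventually.of_forall fun n => ?_) ?_
  · exact neg_le_ema_of_sum_le ha0 ha1 hyM hM (Nat.sqrt_le' n)
      (hsub le_rfl (Nat.lt_succ_sqrt' n).le)
  · filter_upwards [hsqrt.eventually (hδ.eventually_lt_const one_pos)] with n hn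
    exact ema_le_of_sum_le ha0 ha1 hyM hM (Nat.lt_succ_sqrt' n).le
      (hsub (Nat.sqrt_le' n) le_rfl) hn

end Ema

section Weights

variable {a : ℕ → ℝ}

def emaWeight (a : ℕ → ℝ) (n k : ℕ) : ℝ := a k * ∏ j ∈ Ioc k n, (1 - a j)

lemma emaWeight_self (a : ℕ → ℝ) (n : ℕ) : emaWeight a n n = a n := by
  simp [emaWeight]

lemma emaWeight_succ (a : ℕ → ℝ) {n k : ℕ} (hk : k ≤ n) :
    emaWeight a (n + 1) k = emaWeight a n k * (1 - a (n + 1)) := by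
  rw [emaWeight, emaWeight, prod_Ioc_succ_top hk, mul_assoc]

lemma ema_eq_sum_emaWeight (ha : a 0 = 1) (y : ℕ → ℝ) (n : ℕ) :
    ema a y n = ∑ k ∈ range (n + 1), emaWeight a n k * y k := by
  induction n with
  | zero => simp [ema, emaWeight, ha]
  | succ n ih =>
    rw [ema, ih, sum_range_succ _ (n + 1), emaWeight_self, mul_sum]
    congr 1
    refine sum_congr rfl fun k hk => ?_
    rw [emaWeight_succ a (Nat.lt_succ_iff.1 (mem_range.1 hk))]
    ring

lemma sum_emaWeight (ha : a 0 = 1) (n : ℕ) : ∑ k ∈ range (n + 1), emaWeight a n k = 1 := by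
  simpa using (ema_eq_sum_emaWeight ha (fun _ => 1) n).symm.trans (ema_const a 1 n)

lemma emaWeight_nonneg (ha0 : ∀ n, 0 ≤ a n) (ha1 : ∀ n, a n ≤ 1) (n k : ℕ) :
    0 ≤ emaWeight a n k :=
  mul_nonneg (ha0 k) (prod_nonneg fun j _ => sub_nonneg.2 (ha1 j))

lemma emaWeight_le (ha1 : ∀ n, a n ≤ 1) (hstep : ∀ n, a n * (1 - a (n + 1)) ≤ a (n + 1))
    {n k : ℕ} (hk : k ≤ n) : emaWeight a n k ≤ a n := by
  induction n, hk using Nat.le_induction with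
  | base => rw [emaWeight_self]
  | succ n hkn ih =>
    rw [emaWeight_succ a hkn]
    exact (mul_le_mul_of_nonneg_right ih (sub_nonneg.2 (ha1 _))).trans (hstep n)

end Weights

noncomputable def stepSize (p : ℝ) (n : ℕ) : ℝ := ((n : ℝ) + 1) ^ (-p)

section StepSize

variable {p : ℝ}

lemma stepSize_zero (p : ℝ) : stepSize p 0 = 1 := by simp [stepSize]

lemma stepSize_nonneg (p : ℝ) (n : ℕ) : 0 ≤ stepSize p n := by
  unfold stepSize; positivity

lemma stepSize_le_one (hp : 0 ≤ p) (n : ℕ) : stepSize p n ≤ 1 :=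
  Real.rpow_le_one_of_one_le_of_nonpos (by linarith [n.cast_nonneg (α := ℝ)]) (by linarith)

-- `(n + 2) ^ p ≤ (n + 1) ^ p + 1` by subadditivity of `x ↦ x ^ p` for `p ≤ 1`.
lemma stepSize_mul_one_sub_le (hp0 : 0 ≤ p) (hp1 : p ≤ 1) (n : ℕ) :
    stepSize p n * (1 - stepSize p (n + 1)) ≤ stepSize p (n + 1) := by
  have hx : (0 : ℝ) < n + 1 := by positivity
  set A := ((n : ℝ) + 1) ^ p
  set B := ((n : ℝ) + 1 + 1) ^ p
  have hA : 0 < A := by positivity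
  have hB : 0 < B := by positivity
  have hBA : B ≤ A + 1 := by
    simpa using Real.rpow_add_le_add_rpow hx.le zero_le_one hp0 hp1
  simp only [stepSize, Nat.cast_add_one, Real.rpow_neg hx.le,
    Real.rpow_neg (by positivity : (0 : ℝ) ≤ n + 1 + 1)]
  rw [inv_mul_le_iff₀ hA]
  calc 1 - B⁻¹ = (B - 1) * B⁻¹ := by field_simp
    _ ≤ A * B⁻¹ := by gcongr; linarith

lemma stepSize_le_rpow (hp : 0 ≤ p) {j k : ℕ} (hk : 0 < k) (hkj : k ^ 2 ≤ j) :
    stepSize p j ≤ (k : ℝ) ^ (-(2 * p)) := by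
  rw [show -(2 * p) = ((2 : ℕ) : ℝ) * -p by push_cast; ring,
    Real.rpow_natCast_mul (Nat.cast_nonneg k)]
  have hkj' : ((k : ℝ) ^ 2) ≤ j + 1 := by
    have : ((k ^ 2 : ℕ) : ℝ) ≤ j := by exact_mod_cast hkj
    push_cast at this; linarith
  exact Real.rpow_le_rpow_of_nonpos (by positivity) hkj' (by linarith)

lemma summable_stepSize_sq (hp : 1 / 2 < p) : Summable fun k => stepSize p (k ^ 2) :=
  Summable.of_norm_bounded_eventually_nat (Real.summable_nat_rpow.2 (by linarith : -(2 * p) < -1))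
    (eventually_atTop.2 ⟨1, fun k hk => by
      rw [Real.norm_of_nonneg (stepSize_nonneg _ _)]
      exact stepSize_le_rpow (by linarith) hk le_rfl⟩)

lemma tendsto_sum_stepSize_Ioc_sq (hp : 1 / 2 < p) :
    Tendsto (fun k => ∑ j ∈ Ioc (k ^ 2) ((k + 1) ^ 2), stepSize p j) atTop (𝓝 0) := by
  have hbound : ∀ k : ℕ, 0 < k →
      ∑ j ∈ Ioc (k ^ 2) ((k + 1) ^ 2), stepSize p j ≤ 3 * (k : ℝ) ^ (1 - 2 * p) := by
    intro k hk
    have hk1 : (1 : ℝ) ≤ k := by exact_mod_cast hk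
    calc ∑ j ∈ Ioc (k ^ 2) ((k + 1) ^ 2), stepSize p j
        ≤ ∑ j ∈ Ioc (k ^ 2) ((k + 1) ^ 2), (k : ℝ) ^ (-(2 * p)) :=
          sum_le_sum fun j hj => stepSize_le_rpow (by linarith) hk (mem_Ioc.1 hj).1.le
      _ = ((2 * k + 1 : ℕ) : ℝ) * (k : ℝ) ^ (-(2 * p)) := by
          rw [sum_const, Nat.card_Ioc, nsmul_eq_mul,
            show (k + 1) ^ 2 = k ^ 2 + (2 * k + 1) by ring, Nat.add_sub_cancel_left]
      _ ≤ 3 * k * (k : ℝ) ^ (-(2 * p)) := by gcongr; push_cast; linarith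
      _ = 3 * (k : ℝ) ^ (1 - 2 * p) := by
          rw [sub_eq_add_neg, Real.rpow_add (by positivity), Real.rpow_one, mul_assoc]
  have hlim : Tendsto (fun k : ℕ => 3 * (k : ℝ) ^ (1 - 2 * p)) atTop (𝓝 0) := by
    have := ((tendsto_rpow_neg_atTop (by linarith : 0 < 2 * p - 1)).comp
      tendsto_natCast_atTop_atTop).const_mul 3
    simpa [Function.comp_def, neg_sub] using this
  exact tendsto_of_tendsto_of_tendsto_of_le_of_le' tendsto_const_nhds hlim
    (Eventually.of_forall fun k => sum_nonneg fun j _ => stepSize_nonneg p j)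
    (eventually_atTop.2 ⟨1, fun k hk => hbound k hk⟩)

end StepSize

lemma sum_dist_le_two_mul_tsum {f : ℕ → ℝ} (hf0 : ∀ m, 0 ≤ f m) (hf : Summable f)
    (s : Finset ℕ) (i : ℕ) : ∑ j ∈ s, f (Nat.dist i j) ≤ 2 * ∑' m, f m := by
  have hinj : ∀ t : Finset ℕ, Set.InjOn (Nat.dist i) t →
      ∑ j ∈ t, f (Nat.dist i j) ≤ ∑' m, f m := fun t ht => by
    rw [← sum_image ht]
    exact hf.sum_le_tsum _ fun m _ => hf0 m
  -- `j ↦ Nat.dist i j` is injective on either side of `i`.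
  rw [← sum_filter_add_sum_filter_not s (· ≤ i), two_mul]
  gcongr <;> apply hinj <;> intro x hx y hy hxy <;> simp [Nat.dist] at hx hy hxy <;> omega

section Probability

variable {Ω : Type*} [MeasurableSpace Ω] {μ : Measure Ω}

lemma MeasureTheory.MeasurePreserving.integral_comp_of_aestronglyMeasurable {Ω' : Type*}
    [MeasurableSpace Ω'] {μ' : Measure Ω'} {T : Ω' → Ω} (hT : MeasurePreserving T μ' μ)
    {f : Ω → ℝ} (hf : AEStronglyMeasurable f μ) : ∫ ω, f (T ω) ∂μ' = ∫ ω, f ω ∂μ := by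
  conv_rhs => rw [← hT.map_eq]
  exact (integral_map hT.aemeasurable (hT.map_eq ▸ hf)).symm

lemma MeasureTheory.MeasurePreserving.covariance_comp {Ω' : Type*} [MeasurableSpace Ω']
    {μ' : Measure Ω'} {T : Ω' → Ω} (hT : MeasurePreserving T μ' μ) {X Y : Ω → ℝ}
    (hX : AEStronglyMeasurable X μ) (hY : AEStronglyMeasurable Y μ) :
    cov[fun ω => X (T ω), fun ω => Y (T ω); μ'] = cov[X, Y; μ] := by
  rw [← covariance_map_fun (hT.map_eq ▸ hX) (hT.map_eq ▸ hY) hT.aemeasurable, hT.map_eq]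

lemma covariance_comp_iterate {θ : Ω → Ω} (hθ : MeasurePreserving θ μ μ) {g : Ω → ℝ}
    (hg : AEStronglyMeasurable g μ) (i j : ℕ) :
    cov[fun ω => g (θ^[i] ω), fun ω => g (θ^[j] ω); μ] =
      cov[g, fun ω => g (θ^[Nat.dist i j] ω); μ] := by
  wlog hij : i ≤ j generalizing i j
  · rw [covariance_comm, this j i (le_of_not_ge hij), Nat.dist_comm]
  obtain ⟨m, rfl⟩ := Nat.exists_eq_add_of_le' hij
  simp_rw [Function.iterate_add_apply]
  refine ((hθ.iterate i).covariance_comp hg (hg.comp_measurePreserving (hθ.iterate m))).trans ?_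
  simp [Nat.dist, Function.comp_def]

lemma memLp_ema {p : ENNReal} {Y : ℕ → Ω → ℝ} (hY : ∀ k, MemLp (Y k) p μ) (a : ℕ → ℝ)
    (n : ℕ) : MemLp (fun ω => ema a (fun k => Y k ω) n) p μ := by
  induction n with
  | zero => exact hY 0
  | succ n ih => exact (ih.const_mul _).add ((hY _).const_mul _)

lemma integral_ema {Y : ℕ → Ω → ℝ} (hY : ∀ k, Integrable (Y k) μ)
    {m : ℝ} (hm : ∀ k, ∫ ω, Y k ω ∂μ = m) (a : ℕ → ℝ) (n : ℕ) :
    ∫ ω, ema a (fun k => Y k ω) n ∂μ = m := by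
  induction n with
  | zero => exact hm 0
  | succ n ih =>
    have hint : Integrable (fun ω => ema a (fun k => Y k ω) n) μ :=
      memLp_one_iff_integrable.1 (memLp_ema (fun k => memLp_one_iff_integrable.2 (hY k)) a n)
    simp only [ema]
    rw [integral_add (hint.const_mul _) ((hY _).const_mul _), integral_const_mul,
      integral_const_mul, ih, hm]
    ring

lemma variance_sum_mul_le [IsFiniteMeasure μ] {Y : ℕ → Ω → ℝ} (hY : ∀ k, MemLp (Y k) 2 μ)
    {ρ : ℕ → ℝ} (hcov : ∀ i j, cov[Y i, Y j; μ] = ρ (Nat.dist i j))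
    (hρ : Summable fun m => |ρ m|) {s : Finset ℕ} {w : ℕ → ℝ} {b : ℝ}
    (hw0 : ∀ k ∈ s, 0 ≤ w k) (hwb : ∀ k ∈ s, w k ≤ b) :
    Var[fun ω => ∑ k ∈ s, w k * Y k ω; μ] ≤ 2 * (∑' m, |ρ m|) * b * ∑ k ∈ s, w k := by
  rw [variance_fun_sum' fun k _ => (hY k).const_mul (w k), mul_sum]
  simp_rw [covariance_const_mul_left, covariance_const_mul_right, hcov]
  refine sum_le_sum fun i hi => ?_
  have hb : 0 ≤ w i * b := mul_nonneg (hw0 i hi) ((hw0 i hi).trans (hwb i hi))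
  calc ∑ j ∈ s, w i * (w j * ρ (Nat.dist i j))
      ≤ ∑ j ∈ s, w i * (b * |ρ (Nat.dist i j)|) := by
        refine sum_le_sum fun j hj => mul_le_mul_of_nonneg_left ?_ (hw0 i hi)
        exact (mul_le_mul_of_nonneg_left (le_abs_self _) (hw0 j hj)).trans
          (mul_le_mul_of_nonneg_right (hwb j hj) (abs_nonneg _))
    _ = w i * b * ∑ j ∈ s, |ρ (Nat.dist i j)| := by rw [mul_sum]; simp_rw [mul_assoc]
    _ ≤ w i * b * (2 * ∑' m, |ρ m|) :=
        mul_le_mul_of_nonneg_left (sum_dist_le_two_mul_tsum (fun m => abs_nonneg _) hρ s i) hb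
    _ = 2 * (∑' m, |ρ m|) * b * w i := by ring

lemma integral_sq_ema_sub_le [IsFiniteMeasure μ] {θ : Ω → Ω}
    (hθ : MeasurePreserving θ μ μ) {g : Ω → ℝ} (hg : MemLp g 2 μ) {a : ℕ → ℝ} (ha : a 0 = 1)
    (ha0 : ∀ n, 0 ≤ a n) (ha1 : ∀ n, a n ≤ 1) (hstep : ∀ n, a n * (1 - a (n + 1)) ≤ a (n + 1))
    (hsum : Summable fun m => |cov[g, fun ω => g (θ^[m] ω); μ]|) (n : ℕ) :
    ∫ ω, (ema a (fun k => g (θ^[k] ω)) n - ∫ ω, g ω ∂μ) ^ 2 ∂μ ≤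
      2 * (∑' m, |cov[g, fun ω => g (θ^[m] ω); μ]|) * a n := by
  have hY : ∀ k, MemLp (fun ω => g (θ^[k] ω)) 2 μ := fun k =>
    hg.comp_measurePreserving (hθ.iterate k)
  have hmean : ∫ ω, ema a (fun k => g (θ^[k] ω)) n ∂μ = ∫ ω, g ω ∂μ :=
    integral_ema (fun k => (hY k).integrable one_le_two)
      (fun k => (hθ.iterate k).integral_comp_of_aestronglyMeasurable hg.1) a n
  rw [← hmean, ← variance_eq_integral (memLp_ema hY a n).1.aemeasurable]
  simp_rw [ema_eq_sum_emaWeight ha]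
  calc _ ≤ 2 * (∑' m, |cov[g, fun ω => g (θ^[m] ω); μ]|) * a n *
        ∑ k ∈ range (n + 1), emaWeight a n k :=
        variance_sum_mul_le hY (covariance_comp_iterate hθ hg.1) hsum
          (fun k _ => emaWeight_nonneg ha0 ha1 n k)
          (fun k hk => emaWeight_le ha1 hstep (Nat.lt_succ_iff.1 (mem_range.1 hk)))
    _ = _ := by rw [sum_emaWeight ha, mul_one]

lemma ae_tendsto_zero_of_summable_integral_sq {Z : ℕ → Ω → ℝ} (hZ : ∀ k, MemLp (Z k) 2 μ)
    (hs : Summable fun k => ∫ ω, Z k ω ^ 2 ∂μ) :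
    ∀ᵐ ω ∂μ, Tendsto (fun k => Z k ω) atTop (𝓝 0) := by
  have hnorm : ∀ k, eLpNorm (fun ω => Z k ω ^ 2) 1 μ = ENNReal.ofReal (∫ ω, Z k ω ^ 2 ∂μ) := by
    intro k
    rw [eLpNorm_one_eq_lintegral_enorm, ofReal_integral_eq_lintegral_ofReal (hZ k).integrable_sq
      (ae_of_all _ fun ω => sq_nonneg _)]
    simp_rw [Real.enorm_of_nonneg (sq_nonneg _)]
  have hfin : ∑' k, eLpNorm (fun ω => Z k ω ^ 2) 1 μ ≠ ⊤ := by
    simp_rw [hnorm]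
    rw [← ENNReal.ofReal_tsum_of_nonneg (fun k => integral_nonneg fun ω => sq_nonneg _) hs]
    exact ENNReal.ofReal_ne_top
  filter_upwards [summable_norm_of_tsum_eLpNorm_ne_top le_rfl
    (fun k => (hZ k).integrable_sq.aestronglyMeasurable) hfin] with ω hω
  have h := hω.tendsto_atTop_zero.sqrt
  simp only [norm_pow, Real.sqrt_sq (norm_nonneg _), Real.sqrt_zero] at h
  exact tendsto_zero_iff_norm_tendsto_zero.2 h

end Probability

theorem stmt_13 {Γ : Type*} [MeasurableSpace Γ] (π : Measure Γ) [IsProbabilityMeasure π]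
    (θ : Γ → Γ) (hθ : MeasurePreserving θ π π)
    (g : Γ → ℝ) (hg : MemLp g 2 π)
    (c : ℝ) (hgc : ∀ ω, c ≤ g ω)
    (ρ : ℕ → ℝ)
    (hρ : ∀ m : ℕ, ρ m = (∫ ω, g ω * g (θ^[m] ω) ∂π) - (∫ ω, g ω ∂π) ^ 2)
    (hρsum : Summable fun m => |ρ m|)
    (p : ℝ) (hp0 : 1 / 2 < p) (hp1 : p ≤ 1)
    (τhat : Γ → ℕ → ℝ)
    (hinit : ∀ ω₀, τhat ω₀ 1 = g ω₀)
    (hrec : ∀ ω₀, ∀ n : ℕ, 1 ≤ n →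
      τhat ω₀ (n + 1) =
        (1 - ((n : ℝ) + 1) ^ (-p)) * τhat ω₀ n + ((n : ℝ) + 1) ^ (-p) * g (θ^[n] ω₀)) :
    ∀ᵐ ω₀ ∂π, Tendsto (fun n => τhat ω₀ n) atTop (𝓝 (∫ ω, g ω ∂π)) := by
  set μ := ∫ ω, g ω ∂π
  have hp : 0 ≤ p := by linarith
  have hcov : ∀ m, ρ m = cov[g, fun ω => g (θ^[m] ω); π] := fun m => by
    have hgm : MemLp (fun ω => g (θ^[m] ω)) 2 π := hg.comp_measurePreserving (hθ.iterate m)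
    rw [hρ, covariance_eq_sub hg hgm]
    simp [(hθ.iterate m).integral_comp_of_aestronglyMeasurable hg.1, μ, sq]
  have hτ : ∀ ω n, τhat ω (n + 1) = ema (stepSize p) (fun k => g (θ^[k] ω)) n := by
    intro ω n
    induction n with
    | zero => exact hinit ω
    | succ n ih => rw [hrec ω (n + 1) (by omega), ih]; rfl
  have hsq : ∀ᵐ ω ∂π,
      Tendsto (fun k => ema (stepSize p) (fun j => g (θ^[j] ω) - μ) (k ^ 2)) atTop (𝓝 0) := by
    simp_rw [ema_sub_const]
    refine ae_tendsto_zero_of_summable_integral_sq (fun k =>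
      (memLp_ema (fun j => hg.comp_measurePreserving (hθ.iterate j)) _ _).sub (memLp_const μ)) ?_
    refine Summable.of_nonneg_of_le (fun k => integral_nonneg fun ω => sq_nonneg _)
      (fun k => integral_sq_ema_sub_le hθ hg (stepSize_zero p) (stepSize_nonneg p)
        (stepSize_le_one hp) (stepSize_mul_one_sub_le hp hp1)
        (by simpa only [hcov] using hρsum) (k ^ 2))
      ((summable_stepSize_sq hp0).mul_left _)
  filter_upwards [hsq] with ω hω
  have hlim := tendsto_ema_zero_of_tendsto_sq (stepSize_nonneg p) (stepSize_le_one hp)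
    ⟨c - μ, by rintro _ ⟨k, rfl⟩; linarith [hgc (θ^[k] ω)]⟩ hω (tendsto_sum_stepSize_Ioc_sq hp0)
  rw [← tendsto_add_atTop_iff_nat 1]
  simpa [hτ, ema_sub_const] using hlim.add_const μ
end

section
/- Let p > 1 and let N₀ ∈ ℕ satisfy Σ_{n=N₀+1}^∞ n^{−p} < 1/4. Let (X_n)_{n≥1} be independent random variables with P(X_n = 1) = P(X_n = −1) = 1/2, and let (τ̂_n)_{n≥1} be the p-EMA of (X_n), i.e. τ̂_1 = X_1 and τ̂_{n+1} = (1 − (n+1)^{−p}) τ̂_n + (n+1)^{−p} X_{n+1}. Then the event A = {X_1 = ⋯ = X_{N₀} = 1} has probability 2^{−N₀} > 0, and on A one has τ̂_n > 1/2 for all n ≥ N₀. In particular, τ̂_n does not converge to E[X_1] = 0 almost surely. -/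
/-!
On the event that the first `N₀` signs are `+1`, the EMA equals `1` at time `N₀`. Each later
step replaces `τ̂` by a convex combination of `τ̂` and a sign `≥ -1`, which lowers `1 - τ̂` by
at most twice the weight, so `τ̂_n ≥ 1 - 2 ∑_{m > N₀} m^{-p} > 1/2` for all `n ≥ N₀`. By
independence this event has probability `2^{-N₀} > 0`, which rules out almost sure convergence
to `0`.
-/

open Filter MeasureTheory Topology ProbabilityTheory Finset

theorem one_sub_two_mul_sum_le_of_convex_step {t a x : ℕ → ℝ} (h0 : 1 ≤ t 0)
    (ha0 : ∀ n, 0 ≤ a n) (ha1 : ∀ n, a n ≤ 1) (hx : ∀ n, -1 ≤ x n)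
    (hstep : ∀ n, t (n + 1) = (1 - a n) * t n + a n * x n) (n : ℕ) :
    1 - 2 * ∑ i ∈ range n, a i ≤ t n := by
  induction n with
  | zero => simpa using h0
  | succ n ih =>
    have hS : 0 ≤ ∑ i ∈ range n, a i := sum_nonneg fun i _ => ha0 i
    have hdecay : (1 - a n) * (1 - 2 * ∑ i ∈ range n, a i) ≤ (1 - a n) * t n :=
      mul_le_mul_of_nonneg_left ih (by linarith [ha1 n])
    have hinput : -a n ≤ a n * x n := by nlinarith [ha0 n, hx n]
    rw [hstep, sum_range_succ]
    nlinarith [ha0 n]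

theorem one_sub_two_mul_sum_rpow_neg_le {t x : ℕ → ℝ} {p : ℝ} (hp : 0 ≤ p) {N : ℕ}
    (hN : t N = 1) (hx : ∀ n, N < n → -1 ≤ x n)
    (hrec : ∀ n, N ≤ n →
      t (n + 1) = (1 - ((n : ℝ) + 1) ^ (-p)) * t n + ((n : ℝ) + 1) ^ (-p) * x (n + 1))
    (m : ℕ) : 1 - 2 * ∑ i ∈ range m, ((N : ℝ) + 1 + i) ^ (-p) ≤ t (N + m) :=
  one_sub_two_mul_sum_le_of_convex_step (t := fun m => t (N + m)) (x := fun m => x (N + m + 1))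
    hN.ge (fun i => by positivity)
    (fun i => Real.rpow_le_one_of_one_le_of_nonpos
      (by linarith [N.cast_nonneg (α := ℝ), i.cast_nonneg (α := ℝ)]) (by linarith))
    (fun i => hx _ (by omega))
    (fun i => by
      simp only [← add_assoc, hrec (N + i) (by omega)]
      push_cast
      ring_nf) m

theorem eq_one_of_convex_step_of_eq_one {t a x : ℕ → ℝ} {N : ℕ} (h1 : t 1 = x 1)
    (hstep : ∀ n, 1 ≤ n → t (n + 1) = (1 - a n) * t n + a n * x (n + 1))
    (hx : ∀ k ∈ Icc 1 N, x k = 1) {n : ℕ} (hn1 : 1 ≤ n) (hnN : n ≤ N) : t n = 1 := by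
  induction n, hn1 using Nat.le_induction with
  | base => rw [h1, hx 1 (mem_Icc.2 ⟨le_rfl, hnN⟩)]
  | succ n hn ih =>
    rw [hstep n hn, ih (by omega), hx (n + 1) (mem_Icc.2 ⟨by omega, hnN⟩)]
    ring

theorem summable_add_nat_rpow_neg {p : ℝ} (hp : 1 < p) {c : ℝ} (hc : 0 < c) :
    Summable fun n : ℕ => (c + n) ^ (-p) := by
  refine ((Real.summable_one_div_nat_add_rpow c p).2 hp).congr fun n => ?_
  rw [abs_of_pos (by positivity), Real.rpow_neg (by positivity), one_div, add_comm]

theorem ProbabilityTheory.iIndepFun.measure_forall_eq {Ω ι β : Type*} [MeasurableSpace Ω]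
    [MeasurableSpace β] [MeasurableSingletonClass β] {P : Measure Ω} {X : ι → Ω → β}
    (hX : iIndepFun X P) (S : Finset ι) {c : β} {q : ENNReal}
    (hq : ∀ i ∈ S, P {ω | X i ω = c} = q) :
    P {ω | ∀ i ∈ S, X i ω = c} = q ^ S.card := by
  have hinter : {ω | ∀ i ∈ S, X i ω = c} = ⋂ i ∈ S, X i ⁻¹' {c} := by
    ext ω
    simp
  rw [hinter, hX.meas_biInter fun i _ => ⟨{c}, measurableSet_singleton c, rfl⟩]
  exact (prod_congr rfl hq).trans (prod_const q)

theorem not_ae_tendsto_of_measure_ne_zero {Ω : Type*} [MeasurableSpace Ω] {P : Measure Ω}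
    {A : Set Ω} (hA : P A ≠ 0) {f : Ω → ℕ → ℝ} {c l : ℝ} (hlc : l < c)
    (hf : ∀ ω ∈ A, ∀ᶠ n in atTop, c ≤ f ω n) :
    ¬ ∀ᵐ ω ∂P, Tendsto (f ω) atTop (𝓝 l) := by
  intro hae
  obtain ⟨ω, hωA, hω⟩ : ∃ ω ∈ A, Tendsto (f ω) atTop (𝓝 l) := by
    by_contra! hnot
    exact hA (measure_mono_null (fun ω hω => hnot ω hω) (ae_iff.1 hae))
  exact hlc.not_ge (ge_of_tendsto hω (hf ω hωA))

theorem stmt_15_general {Ω : Type*} [MeasurableSpace Ω] (P : Measure Ω) [IsProbabilityMeasure P]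
    (X : ℕ → Ω → ℝ)
    (hXindep : iIndepFun X P)
    (hXval : ∀ n : ℕ, 1 ≤ n → ∀ ω, X n ω = 1 ∨ X n ω = -1)
    (hX1 : ∀ n : ℕ, 1 ≤ n → P {ω | X n ω = 1} = 1 / 2)
    (p : ℝ) (hp : 1 < p)
    (N₀ : ℕ) (hN₀1 : 1 ≤ N₀)
    (hN₀ : ∑' n : ℕ, ((N₀ : ℝ) + 1 + n) ^ (-p) < 1 / 4)
    (τhat : Ω → ℕ → ℝ)
    (hinit : ∀ ω, τhat ω 1 = X 1 ω)
    (hrec : ∀ ω, ∀ n : ℕ, 1 ≤ n →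
      τhat ω (n + 1) =
        (1 - ((n : ℝ) + 1) ^ (-p)) * τhat ω n + ((n : ℝ) + 1) ^ (-p) * X (n + 1) ω) :
    P {ω | ∀ k ∈ Finset.Icc 1 N₀, X k ω = 1} = (1 / 2 : ENNReal) ^ N₀ ∧
      (0 : ENNReal) < (1 / 2 : ENNReal) ^ N₀ ∧
      (∀ ω ∈ {ω | ∀ k ∈ Finset.Icc 1 N₀, X k ω = 1}, ∀ n : ℕ, N₀ ≤ n → 1 / 2 < τhat ω n) ∧
      ¬ (∀ᵐ ω ∂P, Tendsto (fun n => τhat ω n) atTop (𝓝 0)) := by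
  set w : ℕ → ℝ := fun m => ((N₀ : ℝ) + 1 + m) ^ (-p)
  have hw0 : ∀ m, 0 ≤ w m := fun m => by positivity
  have hmeas : P {ω | ∀ k ∈ Icc 1 N₀, X k ω = 1} = (1 / 2 : ENNReal) ^ N₀ := by
    rw [hXindep.measure_forall_eq _ fun k hk => hX1 k (mem_Icc.1 hk).1, Nat.card_Icc,
      Nat.add_sub_cancel]
  have hpos : (0 : ENNReal) < (1 / 2 : ENNReal) ^ N₀ := by simp [ENNReal.pow_pos]
  have hlow : ∀ ω ∈ {ω | ∀ k ∈ Icc 1 N₀, X k ω = 1}, ∀ n, N₀ ≤ n → 1 / 2 < τhat ω n := by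
    intro ω hω n hn
    obtain ⟨m, rfl⟩ := Nat.exists_eq_add_of_le hn
    have hbound : 1 - 2 * ∑ i ∈ range m, w i ≤ τhat ω (N₀ + m) :=
      one_sub_two_mul_sum_rpow_neg_le (x := fun n => X n ω) (by linarith)
        (eq_one_of_convex_step_of_eq_one (hinit ω) (hrec ω) hω hN₀1 le_rfl)
        (fun n hn => by rcases hXval n (by omega) ω with h | h <;> simp [h])
        (fun n hn => hrec ω n (by omega)) m
    have htail : ∑ i ∈ range m, w i ≤ ∑' i, w i :=
      (summable_add_nat_rpow_neg hp (by positivity)).sum_le_tsum _ fun i _ => hw0 i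
    linarith
  refine ⟨hmeas, hpos, hlow, not_ae_tendsto_of_measure_ne_zero (hmeas ▸ hpos.ne')
    (c := 1 / 2) (by norm_num) fun ω hω => ?_⟩
  exact eventually_atTop.2 ⟨N₀, fun n hn => (hlow ω hω n hn).le⟩

theorem stmt_15 {Ω : Type*} [MeasurableSpace Ω] (P : Measure Ω) [IsProbabilityMeasure P]
    (X : ℕ → Ω → ℝ) (hXmeas : ∀ n, Measurable (X n))
    (hXindep : iIndepFun X P)
    (hXval : ∀ n : ℕ, 1 ≤ n → ∀ ω, X n ω = 1 ∨ X n ω = -1)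
    (hX1 : ∀ n : ℕ, 1 ≤ n → P {ω | X n ω = 1} = 1 / 2)
    (hXm1 : ∀ n : ℕ, 1 ≤ n → P {ω | X n ω = -1} = 1 / 2)
    (p : ℝ) (hp : 1 < p)
    (N₀ : ℕ) (hN₀1 : 1 ≤ N₀)
    (hN₀ : ∑' n : ℕ, ((N₀ : ℝ) + 1 + n) ^ (-p) < 1 / 4)
    (τhat : Ω → ℕ → ℝ)
    (hinit : ∀ ω, τhat ω 1 = X 1 ω)
    (hrec : ∀ ω, ∀ n : ℕ, 1 ≤ n →
      τhat ω (n + 1) =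
        (1 - ((n : ℝ) + 1) ^ (-p)) * τhat ω n + ((n : ℝ) + 1) ^ (-p) * X (n + 1) ω) :
    P {ω | ∀ k ∈ Finset.Icc 1 N₀, X k ω = 1} = (1 / 2 : ENNReal) ^ N₀ ∧
      (0 : ENNReal) < (1 / 2 : ENNReal) ^ N₀ ∧
      (∀ ω ∈ {ω | ∀ k ∈ Finset.Icc 1 N₀, X k ω = 1}, ∀ n : ℕ, N₀ ≤ n → 1 / 2 < τhat ω n) ∧
      ¬ (∀ᵐ ω ∂P, Tendsto (fun n => τhat ω n) atTop (𝓝 0)) :=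
  stmt_15_general P X hXindep hXval hX1 p hp N₀ hN₀1 hN₀ τhat hinit hrec
end

section
/- Let p ∈ (0, 1/2) and let s > 3 satisfy p(1 − s) > −1. Set I_s = ∫_1^∞ x^{−s} dx and let (X_n)_{n≥1} be i.i.d. random variables with values in [1, ∞) whose common law has density f(x) = x^{−s}/I_s on [1, ∞). Let (τ̂_n)_{n≥1} be the p-EMA of (X_n), i.e. τ̂_1 = X_1 and τ̂_{n+1} = (1 − (n+1)^{−p}) τ̂_n + (n+1)^{−p} X_{n+1}. Then almost surely the events {X_n ≥ 2 n^p} occur for infinitely many n, and on the event {X_n ≥ 2 n^p} one has τ̂_n ≥ 3 − n^{−p}; consequently, almost surely limsup_{n→∞} τ̂_n ≥ 3, and τ̂_n does not converge almost surely to the common mean η = E[X_1] = (s−1)/(s−2) < 2. -/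
/-!
The law of `X n` is Pareto with scale `1` and shape `s - 1`, so
`P (X n ≥ 2 n ^ p) = 2 ^ (1 - s) n ^ (p (1 - s))`. Since `p (1 - s) > -1` these probabilities are
not summable, and the second Borel–Cantelli lemma makes `X n ≥ 2 n ^ p` happen infinitely often.
The EMA is a running convex combination of values `≥ 1`, so it stays `≥ 1`, and on such an event
`τ̂ n = (1 - n ^ (-p)) τ̂ (n - 1) + n ^ (-p) X n ≥ (1 - n ^ (-p)) + 2`. Hence `limsup τ̂ n ≥ 3`,
whereas the mean `(s - 1) / (s - 2)` is below `2` for `s > 3`.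
-/

open Filter MeasureTheory Topology ProbabilityTheory
open scoped ENNReal

lemma integral_Ici_rpow_of_lt {r a : ℝ} (hr : r < -1) (ha : 0 < a) :
    ∫ x in Set.Ici a, x ^ r = -a ^ (r + 1) / (r + 1) := by
  rw [integral_Ici_eq_integral_Ioi, integral_Ioi_rpow_of_lt hr ha]

lemma integral_Ioi_one_rpow_neg {s : ℝ} (hs : 1 < s) :
    ∫ x in Set.Ioi (1 : ℝ), x ^ (-s) = (s - 1)⁻¹ := by
  rw [integral_Ioi_rpow_of_lt (by linarith) one_pos, Real.one_rpow, neg_div, ← div_neg, neg_add',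
    neg_neg, one_div]

namespace ProbabilityTheory

variable {t r : ℝ}

lemma paretoMeasure_Ici (ht : 0 < t) (hr : 0 < r) {a : ℝ} (ha : t ≤ a) :
    paretoMeasure t r (Set.Ici a) = ENNReal.ofReal ((t / a) ^ r) := by
  have ha0 : 0 < a := ht.trans_le ha
  have hint : IntegrableOn (fun x => r * t ^ r * x ^ (-(r + 1))) (Set.Ici a) := by
    rw [integrableOn_Ici_iff_integrableOn_Ioi]
    exact (integrableOn_Ioi_rpow_of_lt (by linarith) ha0).const_mul _
  rw [paretoMeasure, withDensity_apply _ measurableSet_Ici,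
    setLIntegral_congr_fun measurableSet_Ici fun x (hx : a ≤ x) => paretoPDF_of_le (ha.trans hx),
    ← ofReal_integral_eq_lintegral_ofReal hint, integral_const_mul,
    integral_Ici_rpow_of_lt (by linarith) ha0, show -(r + 1) + 1 = -r by ring,
    Real.div_rpow ht.le ha0.le, Real.rpow_neg ha0.le]
  · congr 1
    field_simp
  · filter_upwards [ae_restrict_mem measurableSet_Ici] with x (hx : a ≤ x)
    have : 0 < x := ha0.trans_le hx
    positivity

lemma integral_id_paretoMeasure (ht : 0 < t) (hr : 1 < r) :
    ∫ x, x ∂paretoMeasure t r = r * t / (r - 1) := by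
  have hpdf (x : ℝ) : (paretoPDF t r x).toReal = paretoPDFReal t r x :=
    ENNReal.toReal_ofReal (paretoPDFReal_nonneg ht.le (by linarith) x)
  rw [paretoMeasure, integral_withDensity_eq_integral_toReal_smul (f := paretoPDF t r)
    (measurable_paretoPDFReal t r).ennreal_ofReal
    (ae_of_all _ fun _ => ENNReal.ofReal_lt_top)]
  simp only [hpdf, smul_eq_mul]
  rw [← setIntegral_eq_integral_of_forall_compl_eq_zero (s := Set.Ici t) fun x hx => by
    simp [paretoPDFReal, show ¬ t ≤ x from hx]]
  rw [setIntegral_congr_fun measurableSet_Ici fun x (hx : t ≤ x) => show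
    paretoPDFReal t r x * x = r * t ^ r * x ^ (-r) by
      rw [paretoPDFReal, if_pos hx, mul_assoc, ← Real.rpow_add_one (ht.trans_le hx).ne']
      ring_nf]
  rw [integral_const_mul, integral_Ici_rpow_of_lt (by linarith) ht, show -r + 1 = -(r - 1) by ring,
    Real.rpow_neg ht.le, Real.rpow_sub_one ht.ne']
  have : r - 1 ≠ 0 := by linarith
  field_simp

lemma withDensity_rpow_neg_eq_paretoMeasure {s : ℝ} (hs : 1 < s) :
    (volume.restrict (Set.Ici (1 : ℝ))).withDensity
        (fun x => ENNReal.ofReal (x ^ (-s) / ∫ x in Set.Ioi (1 : ℝ), x ^ (-s))) =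
      paretoMeasure 1 (s - 1) := by
  rw [paretoMeasure, ← withDensity_indicator measurableSet_Ici]
  congr 1
  ext x
  by_cases hx : 1 ≤ x
  · rw [Set.indicator_of_mem (Set.mem_Ici.mpr hx), paretoPDF_of_le hx,
      integral_Ioi_one_rpow_neg hs, Real.one_rpow, div_inv_eq_mul, sub_add_cancel, mul_one,
      mul_comm]
  · rw [Set.indicator_of_notMem (mt Set.mem_Ici.mp hx), paretoPDF_of_lt (not_le.mp hx)]

end ProbabilityTheory

lemma ae_frequently_le_of_iIndepFun {Ω : Type*} [MeasurableSpace Ω] {P : Measure Ω}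
    [IsProbabilityMeasure P] {X : ℕ → Ω → ℝ} (hX : iIndepFun X P) (hXm : ∀ n, Measurable (X n))
    {c : ℕ → ℝ} (hc : ∑' n, P {ω | c n ≤ X n ω} = ∞) :
    ∀ᵐ ω ∂P, ∃ᶠ n in atTop, c n ≤ X n ω := by
  set A : ℕ → Set Ω := fun n => X n ⁻¹' Set.Ici (c n)
  have hAm (n : ℕ) : MeasurableSet (A n) := hXm n measurableSet_Ici
  have hA : iIndepSet A P := by
    rw [iIndepSet_iff_meas_biInter hAm]
    exact fun S => hX.measure_inter_preimage_eq_mul S fun i _ => measurableSet_Ici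
  have hlimsup : ∀ᵐ ω ∂P, ω ∈ limsup A atTop := by
    rw [ae_mem_iff_measure_eq (MeasurableSet.measurableSet_limsup hAm).nullMeasurableSet,
      measure_limsup_eq_one hAm hA hc, measure_univ]
  filter_upwards [hlimsup] with ω hω using mem_limsup_iff_frequently_mem.mp hω

lemma tsum_ofReal_mul_natCast_rpow_eq_top {c q : ℝ} (hc : 0 < c) (hq : -1 ≤ q) :
    ∑' n : ℕ, ENNReal.ofReal (c * (n : ℝ) ^ q) = ∞ := by
  by_contra h
  have hsum := ENNReal.summable_toReal h
  simp only [fun n : ℕ => ENNReal.toReal_ofReal (by positivity : 0 ≤ c * (n : ℝ) ^ q)] at hsum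
  have := Real.summable_nat_rpow.mp ((summable_mul_left_iff hc.ne').mp hsum)
  linarith

lemma le_limsup_of_frequently_le_of_tendsto {α β : Type*} [CompleteLinearOrder β]
    [DenselyOrdered β] [TopologicalSpace β] [OrderTopology β] {f : Filter α} {u v : α → β} {c : β}
    (hv : Tendsto v f (𝓝 c)) (h : ∃ᶠ n in f, v n ≤ u n) : c ≤ limsup u f :=
  le_of_forall_lt_imp_le_of_dense fun _ hb => le_limsup_of_frequently_le'
    (h.mp ((hv.eventually_const_lt hb).mono fun _ hbv hvu => hbv.le.trans hvu))

lemma Real.rpow_neg_mem_Ioc {p a : ℝ} (hp : 0 ≤ p) (ha : 1 ≤ a) : a ^ (-p) ∈ Set.Ioc 0 1 :=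
  ⟨Real.rpow_pos_of_pos (by linarith) _, Real.rpow_le_one_of_one_le_of_nonpos ha (by linarith)⟩

/-- `τ` is the `p`-exponential moving average of `x`. Both sequences start at index `1`. -/
def IsPEMA (p : ℝ) (x τ : ℕ → ℝ) : Prop :=
  τ 1 = x 1 ∧ ∀ n : ℕ, 1 ≤ n →
    τ (n + 1) = (1 - ((n : ℝ) + 1) ^ (-p)) * τ n + ((n : ℝ) + 1) ^ (-p) * x (n + 1)

namespace IsPEMA

variable {p : ℝ} {x τ : ℕ → ℝ}

lemma le_of_forall_le (h : IsPEMA p x τ) (hp : 0 ≤ p) {m : ℝ} (hx : ∀ n, 1 ≤ n → m ≤ x n) :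
    ∀ n, 1 ≤ n → m ≤ τ n := by
  intro n hn
  induction n, hn using Nat.le_induction with
  | base => exact h.1 ▸ hx 1 le_rfl
  | succ n hn ih =>
    have hn1 : (1 : ℝ) ≤ n + 1 := by linarith [n.cast_nonneg (α := ℝ)]
    obtain ⟨hw0, hw1⟩ := Real.rpow_neg_mem_Ioc hp hn1
    rw [h.2 n hn]
    nlinarith [hx (n + 1) (by omega)]

lemma three_sub_rpow_neg_le (h : IsPEMA p x τ) (hp : 0 ≤ p) (hx : ∀ n, 1 ≤ n → 1 ≤ x n) {n : ℕ}
    (hn : 1 ≤ n) (hxn : 2 * (n : ℝ) ^ p ≤ x n) : 3 - (n : ℝ) ^ (-p) ≤ τ n := by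
  obtain ⟨m, rfl⟩ := Nat.exists_eq_add_of_le' hn
  rcases Nat.eq_zero_or_pos m with rfl | hm
  · simp only [zero_add, Nat.cast_one, Real.one_rpow] at hxn ⊢
    linarith [h.1]
  rw [h.2 m hm]
  push_cast at hxn ⊢
  have ha : (1 : ℝ) ≤ m + 1 := by linarith [m.cast_nonneg (α := ℝ)]
  obtain ⟨hw0, hw1⟩ := Real.rpow_neg_mem_Ioc hp ha
  have hw : ((m : ℝ) + 1) ^ (-p) * ((m : ℝ) + 1) ^ p = 1 := by
    rw [← Real.rpow_add (by linarith), neg_add_cancel, Real.rpow_zero]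
  have hτ := h.le_of_forall_le hp hx m hm
  calc 3 - ((m : ℝ) + 1) ^ (-p)
      = (1 - ((m : ℝ) + 1) ^ (-p)) * 1 + ((m : ℝ) + 1) ^ (-p) * (2 * ((m : ℝ) + 1) ^ p) := by
        rw [mul_left_comm, hw]; ring
    _ ≤ _ := by gcongr

end IsPEMA

lemma tsum_measure_two_mul_rpow_le_eq_top {Ω : Type*} [MeasurableSpace Ω] {P : Measure Ω}
    {X : ℕ → Ω → ℝ} (hXm : ∀ n, Measurable (X n)) {r : ℝ} (hr : 0 < r)
    (hlaw : ∀ n, 1 ≤ n → P.map (X n) = paretoMeasure 1 r) {p : ℝ} (hp : 0 < p) (hpr : p * r ≤ 1) :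
    ∑' n : ℕ, P {ω | 2 * (n : ℝ) ^ p ≤ X n ω} = ∞ := by
  refine top_unique ((tsum_ofReal_mul_natCast_rpow_eq_top (c := 2 ^ (-r)) (q := -(p * r))
    (by positivity) (by linarith)).symm.le.trans (ENNReal.tsum_le_tsum fun n => ?_))
  rcases Nat.eq_zero_or_pos n with rfl | hn
  · rw [Nat.cast_zero, Real.zero_rpow (neg_ne_zero.mpr (mul_pos hp hr).ne'), mul_zero,
      ENNReal.ofReal_zero]
    exact bot_le
  have hnp : 1 ≤ (n : ℝ) ^ p := Real.one_le_rpow (by exact_mod_cast hn) hp.le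
  rw [show {ω | 2 * (n : ℝ) ^ p ≤ X n ω} = X n ⁻¹' Set.Ici (2 * (n : ℝ) ^ p) from rfl,
    ← Measure.map_apply (hXm n) measurableSet_Ici, hlaw n hn,
    paretoMeasure_Ici one_pos hr (by linarith), one_div, Real.inv_rpow (by positivity),
    ← Real.rpow_neg (by positivity), Real.mul_rpow zero_le_two (by positivity),
    ← Real.rpow_mul n.cast_nonneg, mul_neg]

theorem stmt_16_general {Ω : Type*} [MeasurableSpace Ω] (P : Measure Ω) [IsProbabilityMeasure P]
    (p : ℝ) (hp0 : 0 < p)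
    (s : ℝ) (hs : 3 < s) (hps : -1 < p * (1 - s))
    (Is : ℝ) (hIs : Is = ∫ x in Set.Ioi (1 : ℝ), x ^ (-s))
    (X : ℕ → Ω → ℝ) (hXmeas : ∀ n, Measurable (X n))
    (hXval : ∀ n : ℕ, 1 ≤ n → ∀ ω, 1 ≤ X n ω)
    (hXindep : iIndepFun X P)
    (hXlaw : ∀ n : ℕ, 1 ≤ n → Measure.map (X n) P =
      ((volume.restrict (Set.Ici (1 : ℝ))).withDensity fun x => ENNReal.ofReal (x ^ (-s) / Is)))
    (τhat : Ω → ℕ → ℝ)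
    (hinit : ∀ ω, τhat ω 1 = X 1 ω)
    (hrec : ∀ ω, ∀ n : ℕ, 1 ≤ n →
      τhat ω (n + 1) =
        (1 - ((n : ℝ) + 1) ^ (-p)) * τhat ω n + ((n : ℝ) + 1) ^ (-p) * X (n + 1) ω) :
    (∀ᵐ ω ∂P, ∃ᶠ n : ℕ in atTop, 2 * (n : ℝ) ^ p ≤ X n ω) ∧
      (∀ ω, ∀ n : ℕ, 1 ≤ n → 2 * (n : ℝ) ^ p ≤ X n ω → 3 - (n : ℝ) ^ (-p) ≤ τhat ω n) ∧
      (∀ᵐ ω ∂P, (3 : EReal) ≤ Filter.limsup (fun n : ℕ => (τhat ω n : EReal)) atTop) ∧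
      ((∫ ω, X 1 ω ∂P) = (s - 1) / (s - 2) ∧ (s - 1) / (s - 2) < 2) ∧
      ¬ (∀ᵐ ω ∂P, Tendsto (fun n => τhat ω n) atTop (𝓝 ((s - 1) / (s - 2)))) := by
  have hlaw (n : ℕ) (hn : 1 ≤ n) : P.map (X n) = paretoMeasure 1 (s - 1) := by
    rw [hXlaw n hn, hIs, withDensity_rpow_neg_eq_paretoMeasure (by linarith)]
  have hbound (ω : Ω) (n : ℕ) (hn : 1 ≤ n) :
      2 * (n : ℝ) ^ p ≤ X n ω → 3 - (n : ℝ) ^ (-p) ≤ τhat ω n :=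
    IsPEMA.three_sub_rpow_neg_le ⟨hinit ω, hrec ω⟩ hp0.le (fun n hn => hXval n hn ω) hn
  have hfreq : ∀ᵐ ω ∂P, ∃ᶠ n : ℕ in atTop, 2 * (n : ℝ) ^ p ≤ X n ω :=
    ae_frequently_le_of_iIndepFun hXindep hXmeas
      (tsum_measure_two_mul_rpow_le_eq_top hXmeas (by linarith) hlaw hp0 (by linarith))
  have hlimsup : ∀ᵐ ω ∂P, (3 : EReal) ≤ limsup (fun n : ℕ => (τhat ω n : EReal)) atTop := by
    filter_upwards [hfreq] with ω hω
    have hv : Tendsto (fun n : ℕ => 3 - (n : ℝ) ^ (-p)) atTop (𝓝 3) := by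
      simpa using tendsto_const_nhds.sub
        ((tendsto_rpow_neg_atTop hp0).comp tendsto_natCast_atTop_atTop)
    have hfreq_le : ∃ᶠ n : ℕ in atTop, ((3 - (n : ℝ) ^ (-p) : ℝ) : EReal) ≤ τhat ω n :=
      (hω.and_eventually (eventually_ge_atTop 1)).mono fun n h =>
        EReal.coe_le_coe (hbound ω n h.2 h.1)
    exact_mod_cast le_limsup_of_frequently_le_of_tendsto (EReal.tendsto_coe.mpr hv) hfreq_le
  have hmean : ∫ ω, X 1 ω ∂P = (s - 1) / (s - 2) := by
    rw [← integral_map (f := fun x : ℝ => x) (hXmeas 1).aemeasurable aestronglyMeasurable_id,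
      hlaw 1 le_rfl, integral_id_paretoMeasure one_pos (by linarith)]
    ring_nf
  have hlt : (s - 1) / (s - 2) < 2 := by rw [div_lt_iff₀ (by linarith)]; linarith
  refine ⟨hfreq, hbound, hlimsup, ⟨hmean, hlt⟩, fun hconv => ?_⟩
  obtain ⟨ω, hω, h3⟩ := (hconv.and hlimsup).exists
  rw [(EReal.tendsto_coe.mpr hω).limsup_eq] at h3
  have : (3 : ℝ) ≤ (s - 1) / (s - 2) := EReal.coe_le_coe_iff.mp h3
  linarith

theorem stmt_16 {Ω : Type*} [MeasurableSpace Ω] (P : Measure Ω) [IsProbabilityMeasure P]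
    (p : ℝ) (hp0 : 0 < p) (hp12 : p < 1 / 2)
    (s : ℝ) (hs : 3 < s) (hps : -1 < p * (1 - s))
    (Is : ℝ) (hIs : Is = ∫ x in Set.Ioi (1 : ℝ), x ^ (-s))
    (X : ℕ → Ω → ℝ) (hXmeas : ∀ n, Measurable (X n))
    (hXval : ∀ n : ℕ, 1 ≤ n → ∀ ω, 1 ≤ X n ω)
    (hXindep : iIndepFun X P)
    (hXlaw : ∀ n : ℕ, 1 ≤ n → Measure.map (X n) P =
      ((volume.restrict (Set.Ici (1 : ℝ))).withDensity fun x => ENNReal.ofReal (x ^ (-s) / Is)))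
    (τhat : Ω → ℕ → ℝ)
    (hinit : ∀ ω, τhat ω 1 = X 1 ω)
    (hrec : ∀ ω, ∀ n : ℕ, 1 ≤ n →
      τhat ω (n + 1) =
        (1 - ((n : ℝ) + 1) ^ (-p)) * τhat ω n + ((n : ℝ) + 1) ^ (-p) * X (n + 1) ω) :
    (∀ᵐ ω ∂P, ∃ᶠ n : ℕ in atTop, 2 * (n : ℝ) ^ p ≤ X n ω) ∧
      (∀ ω, ∀ n : ℕ, 1 ≤ n → 2 * (n : ℝ) ^ p ≤ X n ω → 3 - (n : ℝ) ^ (-p) ≤ τhat ω n) ∧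
      (∀ᵐ ω ∂P, (3 : EReal) ≤ Filter.limsup (fun n : ℕ => (τhat ω n : EReal)) atTop) ∧
      ((∫ ω, X 1 ω ∂P) = (s - 1) / (s - 2) ∧ (s - 1) / (s - 2) < 2) ∧
      ¬ (∀ᵐ ω ∂P, Tendsto (fun n => τhat ω n) atTop (𝓝 ((s - 1) / (s - 2)))) :=
  stmt_16_general P p hp0 s hs hps Is hIs X hXmeas hXval hXindep hXlaw τhat hinit hrec
end
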